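/- arXiv:2003.08481 — 7 statements merged into one kernel-verified Lean document; each statement's English description precedes it below -/
import Mathlib

section
/- Let $X$ be a nondegenerate subvariety of $\mathbb{P}^n$ of dimension $> 0$, and suppose $H$ is a hyperplane such that the scheme-theoretic intersection $X \cap H$ is reduced. Then $X \cap H$ is nondegenerate as a subscheme of $H \cong \mathbb{P}^{n-1}$, i.e., the irreducible components of $X \cap H$ do not all lie in a single hyperplane of $H$. -/
open MvPolynomial

attribute [local instance] MvPolynomial.gradedAlgebra

/-!
If a linear form `g` vanished on `X ∩ H`, the Nullstellensatz together with the reducedness of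
`X ∩ H` would put `g` in the ideal `P + (h)`. Taking degree-one homogeneous components in
`g = p + f h` gives `g - c h ∈ P` with `c` the constant term of `f`; as `P` contains no nonzero
linear form, `g = c h`.
-/

namespace MvPolynomial

section Homogeneous

variable {σ R : Type*}

lemma IsHomogeneous.eval_zero [CommSemiring R] {g : MvPolynomial σ R} {d : ℕ}
    (hg : g.IsHomogeneous d) (hd : d ≠ 0) : eval 0 g = 0 := by
  rw [MvPolynomial.eval_zero]
  exact hg.coeff_eq_zero (by simpa using hd.symm)

lemma homogeneousComponent_mul_of_isHomogeneous [CommSemiring R] {h : MvPolynomial σ R} {d : ℕ}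
    (hh : h.IsHomogeneous d) (f : MvPolynomial σ R) :
    homogeneousComponent d (f * h) = C (coeff 0 f) * h := by
  rw [← decomposition.decompose'_apply, DirectSum.Decomposition.decompose'_eq,
    DirectSum.coe_decompose_mul_of_right_mem_of_le _ hh le_rfl, Nat.sub_self,
    ← DirectSum.Decomposition.decompose'_eq, decomposition.decompose'_apply,
    homogeneousComponent_zero]

lemma exists_sub_C_mul_mem_of_mem_sup_span [CommRing R] {P : Ideal (MvPolynomial σ R)}
    (hP : P.IsHomogeneous (homogeneousSubmodule σ R)) {g h : MvPolynomial σ R} {d : ℕ}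
    (hg : g.IsHomogeneous d) (hh : h.IsHomogeneous d) (hgP : g ∈ P ⊔ Ideal.span {h}) :
    ∃ c : R, g - C c * h ∈ P := by
  obtain ⟨p, hp, q, hq, rfl⟩ := Submodule.mem_sup.mp hgP
  obtain ⟨f, rfl⟩ := Ideal.mem_span_singleton'.mp hq
  refine ⟨coeff 0 f, ?_⟩
  have hdeg : homogeneousComponent d (p + f * h) = p + f * h :=
    homogeneousComponent_eq_self hg
  rw [← hdeg, map_add, homogeneousComponent_mul_of_isHomogeneous hh, add_sub_cancel_right]
  exact homogeneousComponent_mem_of_mem hP hp d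

end Homogeneous

lemma mem_of_isRadical_of_forall_eval_eq_zero {k σ : Type*} [Field k] [IsAlgClosed k] [Finite σ]
    {I : Ideal (MvPolynomial σ k)} (hI : I.IsRadical) {g : MvPolynomial σ k}
    (hg : ∀ x : σ → k, (∀ f ∈ I, eval x f = 0) → eval x g = 0) : g ∈ I := by
  rw [← hI.radical, ← vanishingIdeal_zeroLocus_eq_radical (K := k)]
  exact fun x hx ↦ hg x hx

end MvPolynomial

theorem stmt_1_general (n : ℕ)
    (P : Ideal (MvPolynomial (Fin (n + 1)) ℂ))
    (hhom : P.IsHomogeneous (homogeneousSubmodule (Fin (n + 1)) ℂ))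
    (hnondeg : ∀ g : MvPolynomial (Fin (n + 1)) ℂ, g.IsHomogeneous 1 → g ∈ P → g = 0)
    (h : MvPolynomial (Fin (n + 1)) ℂ) (hh : h.IsHomogeneous 1)
    (hred : (P ⊔ Ideal.span {h}).IsRadical) :
    ∀ g : MvPolynomial (Fin (n + 1)) ℂ, g.IsHomogeneous 1 →
      (∀ c : ℂ, g ≠ C c * h) →
      ∃ v : Fin (n + 1) → ℂ, v ≠ 0 ∧ (∀ f ∈ P, eval v f = 0) ∧ eval v h = 0 ∧
        eval v g ≠ 0 := by
  intro g hg hgh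
  by_contra! hvan
  have hgJ : g ∈ P ⊔ Ideal.span {h} := by
    refine mem_of_isRadical_of_forall_eval_eq_zero hred fun v hv ↦ ?_
    rcases eq_or_ne v 0 with rfl | hv0
    · exact hg.eval_zero one_ne_zero
    exact hvan v hv0 (fun f hf ↦ hv f (Ideal.mem_sup_left hf))
      (hv h (Ideal.mem_sup_right (Ideal.mem_span_singleton_self h)))
  obtain ⟨c, hc⟩ := exists_sub_C_mul_mem_of_mem_sup_span hhom hg hh hgJ
  exact hgh c (sub_eq_zero.mp (hnondeg _ (hg.sub (hh.C_mul c)) hc))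

/-- **Reduced hyperplane sections of nondegenerate varieties are nondegenerate.**
Let `X = V(P) ⊆ ℙⁿ` be a nondegenerate subvariety of dimension `> 0` (so `P` is a
homogeneous prime ideal, the affine cone has Krull dimension `> 1`, and `P` contains
no nonzero linear form). Let `H = V(h)` be a hyperplane (`h` a nonzero linear form,
`h ∉ P`) such that the scheme-theoretic intersection `X ∩ H` is reduced (the ideal
`P + (h)` is radical). Then `X ∩ H` is nondegenerate in `H ≅ ℙ^{n-1}`: its
irreducible components do not all lie in a single hyperplane of `H`, i.e. for every
linear form `g` not proportional to `h`, the point set of `X ∩ H` is not contained in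
`V(g)`. -/
theorem stmt_1 (n : ℕ) (hn : 1 ≤ n)
    (P : Ideal (MvPolynomial (Fin (n + 1)) ℂ))
    (hhom : P.IsHomogeneous (homogeneousSubmodule (Fin (n + 1)) ℂ))
    (hprime : P.IsPrime)
    (hdim : 1 < ringKrullDim (MvPolynomial (Fin (n + 1)) ℂ ⧸ P))
    (hnondeg : ∀ g : MvPolynomial (Fin (n + 1)) ℂ, g.IsHomogeneous 1 → g ∈ P → g = 0)
    (h : MvPolynomial (Fin (n + 1)) ℂ) (hh : h.IsHomogeneous 1) (hh0 : h ≠ 0)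
    (hhP : h ∉ P)
    (hred : (P ⊔ Ideal.span {h}).IsRadical) :
    ∀ g : MvPolynomial (Fin (n + 1)) ℂ, g.IsHomogeneous 1 →
      (∀ c : ℂ, g ≠ C c * h) →
      ∃ v : Fin (n + 1) → ℂ, v ≠ 0 ∧ (∀ f ∈ P, eval v f = 0) ∧ eval v h = 0 ∧
        eval v g ≠ 0 :=
  stmt_1_general n P hhom hnondeg h hh hred
end

section
/- There exists a smooth, pure-dimensional, nondegenerate, reduced (but reducible) curve $C$ in $\mathbb{P}^3$ whose sequence of secant indices is not strictly increasing: namely the union of three pairwise skew lines $L_1, L_2, L_3$ all meeting a fourth line $L$ has $\mathfrak{L}(C) = (1, 3, 3)$. -/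
/-!
A point of `C` lying in a linear space `M` lies in some `Lᵢ ∩ M`. If `C ∩ M` is finite, no `Lᵢ`
is contained in `M`, since a line has infinitely many points; so each `Lᵢ ∩ M` is at most a
point and `|C ∩ M| ≤ 3` in every dimension. The transversal `L` meets the three skew lines in
three distinct points, and so does any plane through `L` containing none of the `Lᵢ`.
-/

noncomputable section

/-- The points of the union of three lines `ℙ(W₁) ∪ ℙ(W₂) ∪ ℙ(W₃) ⊆ ℙ³`, recorded as
1-dimensional subspaces of `ℂ⁴`. -/
def curvePts (W₁ W₂ W₃ : Submodule ℂ (Fin 4 → ℂ)) : Set (Submodule ℂ (Fin 4 → ℂ)) :=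
  {W | Module.finrank ℂ W = 1 ∧ (W ≤ W₁ ∨ W ≤ W₂ ∨ W ≤ W₃)}

/-- The `j`-th secant index of the union of the three lines: the maximal number of its
points on a `j`-dimensional linear subvariety meeting it in finitely many points (the
intersection of the reduced union of lines with a linear space is automatically
reduced). -/
def secIdxLines (W₁ W₂ W₃ : Submodule ℂ (Fin 4 → ℂ)) (j : ℕ) : ℕ :=
  sSup {c | ∃ M : Submodule ℂ (Fin 4 → ℂ), Module.finrank ℂ M = j + 1 ∧
    (curvePts W₁ W₂ W₃ ∩ {W | W ≤ M}).Finite ∧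
    (curvePts W₁ W₂ W₃ ∩ {W | W ≤ M}).ncard = c}

open Module Submodule Matrix

section ProjectiveSubspaces

variable {K E : Type*} [Field K] [AddCommGroup E] [Module K E]

def projPoints (V : Submodule K E) : Set (Submodule K E) :=
  {U | finrank K U = 1 ∧ U ≤ V}

theorem projPoints_subsingleton [FiniteDimensional K E] {V : Submodule K E}
    (hV : finrank K V ≤ 1) : (projPoints V).Subsingleton := by
  have eq_V : ∀ U ∈ projPoints V, U = V := fun U ⟨hU, hUV⟩ ↦
    eq_of_le_of_finrank_le hUV (hU ▸ hV)
  exact fun U hU U' hU' ↦ (eq_V U hU).trans (eq_V U' hU').symm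

theorem projPoints_of_finrank_eq_one [FiniteDimensional K E] {V : Submodule K E}
    (hV : finrank K V = 1) : projPoints V = {V} := by
  ext U
  refine ⟨fun ⟨hU, hUV⟩ ↦ eq_of_le_of_finrank_le hUV (hU ▸ hV.le), ?_⟩
  rintro rfl
  exact ⟨hV, le_rfl⟩

theorem infinite_projPoints [Infinite K] {V : Submodule K E} (hV : finrank K V = 2) :
    (projPoints V).Infinite := by
  have : Module.Finite K V := Module.finite_of_finrank_pos (by omega)
  let b := finBasisOfFinrankEq K V hV
  set x : E := (b 0 : E)
  set y : E := (b 1 : E)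
  have hli : LinearIndependent K ![x, y] := by
    have h := b.linearIndependent.map' V.subtype V.ker_subtype
    rwa [show V.subtype ∘ b = ![x, y] by ext i; fin_cases i <;> rfl] at h
  rw [LinearIndependent.pair_iff] at hli
  refine Set.infinite_of_injective_forall_mem (f := fun c : K ↦ K ∙ (x + c • y)) ?_ ?_
  · intro c d (hcd : K ∙ (x + c • y) = K ∙ (x + d • y))
    obtain ⟨t, ht⟩ := mem_span_singleton.mp (hcd ▸ mem_span_singleton_self (x + d • y))
    obtain ⟨h₁, h₂⟩ := hli (t - 1) (t * c - d) (by linear_combination (norm := module) ht)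
    linear_combination h₂ - c * h₁
  · intro c
    refine ⟨finrank_span_singleton fun h ↦ ?_, ?_⟩
    · simpa using (hli 1 c (by simpa using h)).1
    · rw [span_singleton_le_iff_mem]
      exact V.add_mem (b 0).2 (V.smul_mem c (b 1).2)

theorem finrank_le_one_of_finite_projPoints [Infinite K] [FiniteDimensional K E]
    {V : Submodule K E} (hV : finrank K V ≤ 2) (hfin : (projPoints V).Finite) :
    finrank K V ≤ 1 := by
  by_contra! h
  exact infinite_projPoints (by omega) hfin

theorem ncard_projPoints_le_one [Infinite K] [FiniteDimensional K E] {V : Submodule K E}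
    (hV : finrank K V ≤ 2)
    (hfin : (projPoints V).Finite) : (projPoints V).ncard ≤ 1 :=
  (Set.ncard_le_one_iff hfin).mpr
    (projPoints_subsingleton (finrank_le_one_of_finite_projPoints hV hfin) · ·)

theorem inf_ne_inf_of_inf_eq_bot {W W' M : Submodule K E} (hWW' : W ⊓ W' = ⊥)
    (hW : finrank K ↥(W ⊓ M) = 1) : W ⊓ M ≠ W' ⊓ M := by
  intro h
  have hle : W ⊓ M ≤ W ⊓ W' := le_inf inf_le_left (h ▸ inf_le_left)
  rw [hWW', le_bot_iff] at hle
  rw [hle, finrank_bot] at hW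
  exact zero_ne_one hW

theorem finrank_inf_eq_one [FiniteDimensional K E] {W M : Submodule K E}
    (hW : finrank K W ≤ 2) (hWM : ¬ W ≤ M) (hne : W ⊓ M ≠ ⊥) : finrank K ↥(W ⊓ M) = 1 := by
  have hlt : finrank K ↥(W ⊓ M) < finrank K W :=
    finrank_lt_finrank_of_lt (inf_le_left.lt_of_ne fun h ↦ hWM (h ▸ inf_le_right))
  have hpos : 1 ≤ finrank K ↥(W ⊓ M) := one_le_finrank_iff.mpr hne
  omega

theorem not_le_of_inf_eq_bot [FiniteDimensional K E] {L W W' : Submodule K E}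
    (hL : finrank K L ≤ finrank K W) (hWW' : W ⊓ W' = ⊥) (hW'L : W' ⊓ L ≠ ⊥) : ¬ W ≤ L := by
  intro hle
  obtain rfl := eq_of_le_of_finrank_le hle hL
  exact hW'L (by rw [inf_comm, hWW'])

theorem sup_eq_top_of_inf_eq_bot [FiniteDimensional K E] {W W' : Submodule K E}
    (h : finrank K W + finrank K W' = finrank K E) (hWW' : W ⊓ W' = ⊥) : W ⊔ W' = ⊤ := by
  apply eq_top_of_finrank_eq
  have := finrank_sup_add_finrank_inf_eq W W'
  rw [hWW', finrank_bot] at this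
  omega

end ProjectiveSubspaces

section UnionOfLines

variable {W₁ W₂ W₃ : Submodule ℂ (Fin 4 → ℂ)}

theorem curvePts_inter_setOf_le (M : Submodule ℂ (Fin 4 → ℂ)) :
    curvePts W₁ W₂ W₃ ∩ {U | U ≤ M} =
      projPoints (W₁ ⊓ M) ∪ projPoints (W₂ ⊓ M) ∪ projPoints (W₃ ⊓ M) := by
  ext U
  simp only [curvePts, projPoints, Set.mem_inter_iff, Set.mem_union, Set.mem_ofPred_eq, le_inf_iff]
  tauto

theorem ncard_curvePts_inter_le_three (h₁ : finrank ℂ W₁ ≤ 2) (h₂ : finrank ℂ W₂ ≤ 2)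
    (h₃ : finrank ℂ W₃ ≤ 2) {M : Submodule ℂ (Fin 4 → ℂ)}
    (hfin : (curvePts W₁ W₂ W₃ ∩ {U | U ≤ M}).Finite) :
    (curvePts W₁ W₂ W₃ ∩ {U | U ≤ M}).ncard ≤ 3 := by
  rw [curvePts_inter_setOf_le] at hfin ⊢
  have bound : ∀ W : Submodule ℂ (Fin 4 → ℂ), finrank ℂ W ≤ 2 → (projPoints (W ⊓ M)).Finite →
      (projPoints (W ⊓ M)).ncard ≤ 1 := fun W hW ↦
    ncard_projPoints_le_one ((finrank_mono inf_le_left).trans hW)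
  calc _ ≤ (projPoints (W₁ ⊓ M)).ncard + (projPoints (W₂ ⊓ M)).ncard +
        (projPoints (W₃ ⊓ M)).ncard :=
        (Set.ncard_union_le _ _).trans (Nat.add_le_add_right (Set.ncard_union_le _ _) _)
    _ ≤ 1 + 1 + 1 := by
        gcongr
        · exact bound W₁ h₁ (hfin.subset (Set.subset_union_left.trans Set.subset_union_left))
        · exact bound W₂ h₂ (hfin.subset (Set.subset_union_right.trans Set.subset_union_left))
        · exact bound W₃ h₃ (hfin.subset Set.subset_union_right)

theorem curvePts_inter_setOf_le_eq {M : Submodule ℂ (Fin 4 → ℂ)}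
    (h₁ : finrank ℂ ↥(W₁ ⊓ M) = 1) (h₂ : finrank ℂ ↥(W₂ ⊓ M) = 1)
    (h₃ : finrank ℂ ↥(W₃ ⊓ M) = 1) :
    curvePts W₁ W₂ W₃ ∩ {U | U ≤ M} = {W₁ ⊓ M, W₂ ⊓ M, W₃ ⊓ M} := by
  rw [curvePts_inter_setOf_le, projPoints_of_finrank_eq_one h₁, projPoints_of_finrank_eq_one h₂,
    projPoints_of_finrank_eq_one h₃, Set.singleton_union, Set.insert_union, Set.singleton_union]

theorem secIdxLines_eq {j n : ℕ}
    (hex : ∃ M : Submodule ℂ (Fin 4 → ℂ), finrank ℂ M = j + 1 ∧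
      (curvePts W₁ W₂ W₃ ∩ {U | U ≤ M}).Finite ∧ (curvePts W₁ W₂ W₃ ∩ {U | U ≤ M}).ncard = n)
    (hle : ∀ M : Submodule ℂ (Fin 4 → ℂ), finrank ℂ M = j + 1 →
      (curvePts W₁ W₂ W₃ ∩ {U | U ≤ M}).Finite → (curvePts W₁ W₂ W₃ ∩ {U | U ≤ M}).ncard ≤ n) :
    secIdxLines W₁ W₂ W₃ j = n :=
  IsGreatest.csSup_eq ⟨hex, by rintro _ ⟨M, hM, hfin, rfl⟩; exact hle M hM hfin⟩

theorem secIdxLines_zero_eq_one {p : Submodule ℂ (Fin 4 → ℂ)} (hp : p ∈ curvePts W₁ W₂ W₃) :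
    secIdxLines W₁ W₂ W₃ 0 = 1 := by
  have subset_singleton : ∀ M : Submodule ℂ (Fin 4 → ℂ), finrank ℂ M = 1 →
      curvePts W₁ W₂ W₃ ∩ {U | U ≤ M} ⊆ {M} := fun M hM U ⟨⟨hU, _⟩, hUM⟩ ↦
    eq_of_le_of_finrank_le hUM (hM ▸ hU.ge)
  have hpoint : curvePts W₁ W₂ W₃ ∩ {U | U ≤ p} = {p} :=
    (subset_singleton p hp.1).antisymm (Set.singleton_subset_iff.mpr ⟨hp, show p ≤ p from le_rfl⟩)
  exact secIdxLines_eq ⟨p, hp.1, by simp [hpoint], by simp [hpoint]⟩ fun M hM _ ↦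
    (Set.ncard_le_ncard (subset_singleton M hM)).trans (Set.ncard_singleton M).le

variable (h₁ : finrank ℂ W₁ = 2) (h₂ : finrank ℂ W₂ = 2) (h₃ : finrank ℂ W₃ = 2)
  (h₁₂ : W₁ ⊓ W₂ = ⊥) (h₁₃ : W₁ ⊓ W₃ = ⊥) (h₂₃ : W₂ ⊓ W₃ = ⊥)
include h₁ h₂ h₃ h₁₂ h₁₃ h₂₃

theorem secIdxLines_eq_three {j : ℕ} {M : Submodule ℂ (Fin 4 → ℂ)} (hM : finrank ℂ M = j + 1)
    (hM₁ : finrank ℂ ↥(W₁ ⊓ M) = 1) (hM₂ : finrank ℂ ↥(W₂ ⊓ M) = 1)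
    (hM₃ : finrank ℂ ↥(W₃ ⊓ M) = 1) :
    secIdxLines W₁ W₂ W₃ j = 3 := by
  have hpts := curvePts_inter_setOf_le_eq hM₁ hM₂ hM₃
  refine secIdxLines_eq ⟨M, hM, by simp [hpts], ?_⟩ fun M _ hfin ↦
    ncard_curvePts_inter_le_three h₁.le h₂.le h₃.le hfin
  rw [hpts, Set.ncard_eq_three]
  exact ⟨_, _, _, inf_ne_inf_of_inf_eq_bot h₁₂ hM₁, inf_ne_inf_of_inf_eq_bot h₁₃ hM₁,
    inf_ne_inf_of_inf_eq_bot h₂₃ hM₂, rfl⟩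

variable {L : Submodule ℂ (Fin 4 → ℂ)} (hL₁ : W₁ ⊓ L ≠ ⊥) (hL₂ : W₂ ⊓ L ≠ ⊥) (hL₃ : W₃ ⊓ L ≠ ⊥)
include hL₁ hL₂ hL₃

theorem finrank_inf_transversal (hL : finrank ℂ L = 2) :
    finrank ℂ ↥(W₁ ⊓ L) = 1 ∧ finrank ℂ ↥(W₂ ⊓ L) = 1 ∧ finrank ℂ ↥(W₃ ⊓ L) = 1 :=
  ⟨finrank_inf_eq_one h₁.le (not_le_of_inf_eq_bot (hL.trans h₁.symm).le h₁₂ hL₂) hL₁,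
    finrank_inf_eq_one h₂.le (not_le_of_inf_eq_bot (hL.trans h₂.symm).le h₂₃ hL₃) hL₂,
    finrank_inf_eq_one h₃.le
      (not_le_of_inf_eq_bot (hL.trans h₃.symm).le (inf_comm W₁ W₃ ▸ h₁₃) hL₁) hL₃⟩

theorem secIdxLines_of_transversal (hL : finrank ℂ L = 2) {P : Submodule ℂ (Fin 4 → ℂ)}
    (hP : finrank ℂ P = 3) (hLP : L ≤ P) (hP₁ : ¬ W₁ ≤ P) (hP₂ : ¬ W₂ ≤ P) (hP₃ : ¬ W₃ ≤ P) :
    secIdxLines W₁ W₂ W₃ 0 = 1 ∧ secIdxLines W₁ W₂ W₃ 1 = 3 ∧ secIdxLines W₁ W₂ W₃ 2 = 3 := by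
  obtain ⟨hL₁', hL₂', hL₃'⟩ := finrank_inf_transversal h₁ h₂ h₃ h₁₂ h₁₃ h₂₃ hL₁ hL₂ hL₃ hL
  have finrank_inf_plane : ∀ W : Submodule ℂ (Fin 4 → ℂ), finrank ℂ W = 2 → ¬ W ≤ P →
      W ⊓ L ≠ ⊥ → finrank ℂ ↥(W ⊓ P) = 1 := fun W hW hWP hWL ↦
    finrank_inf_eq_one hW.le hWP (ne_bot_of_le_ne_bot hWL (inf_le_inf_left W hLP))
  exact ⟨secIdxLines_zero_eq_one ⟨hL₁', Or.inl inf_le_left⟩,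
    secIdxLines_eq_three h₁ h₂ h₃ h₁₂ h₁₃ h₂₃ hL hL₁' hL₂' hL₃',
    secIdxLines_eq_three h₁ h₂ h₃ h₁₂ h₁₃ h₂₃ hP (finrank_inf_plane W₁ h₁ hP₁ hL₁)
      (finrank_inf_plane W₂ h₂ hP₂ hL₂) (finrank_inf_plane W₃ h₃ hP₃ hL₃)⟩

end UnionOfLines

theorem finrank_ker_mulVecLin {K : Type*} [Field K] {m n : ℕ} (A : Matrix (Fin m) (Fin n) K)
    (B : Matrix (Fin n) (Fin m) K) (hAB : A * B = 1) :
    finrank K (LinearMap.ker A.mulVecLin) = n - m := by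
  have hsurj : LinearMap.range A.mulVecLin = ⊤ :=
    LinearMap.range_eq_top.mpr fun y ↦ ⟨B *ᵥ y, by simp [mulVec_mulVec, hAB]⟩
  have := LinearMap.finrank_range_add_finrank_ker A.mulVecLin
  rw [hsurj, finrank_top, finrank_fin_fun, finrank_fin_fun] at this
  omega

/- In coordinates: `L₁ = ⟨e₀, e₁⟩`, `L₂ = ⟨e₂, e₃⟩`, `L₃ = ⟨e₀ + e₂, e₁ + e₃⟩`, the transversal
is `⟨e₀, e₂⟩`, and the plane `2 x₁ = x₃` contains it but none of the `Lᵢ`. -/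
namespace SkewLinesExample

def line₁ : Submodule ℂ (Fin 4 → ℂ) :=
  LinearMap.ker (!![0, 0, 1, 0; 0, 0, 0, 1] : Matrix (Fin 2) (Fin 4) ℂ).mulVecLin

def line₂ : Submodule ℂ (Fin 4 → ℂ) :=
  LinearMap.ker (!![1, 0, 0, 0; 0, 1, 0, 0] : Matrix (Fin 2) (Fin 4) ℂ).mulVecLin

def line₃ : Submodule ℂ (Fin 4 → ℂ) :=
  LinearMap.ker (!![1, 0, -1, 0; 0, 1, 0, -1] : Matrix (Fin 2) (Fin 4) ℂ).mulVecLin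

def transversal : Submodule ℂ (Fin 4 → ℂ) :=
  LinearMap.ker (!![0, 1, 0, 0; 0, 0, 0, 1] : Matrix (Fin 2) (Fin 4) ℂ).mulVecLin

def plane : Submodule ℂ (Fin 4 → ℂ) :=
  LinearMap.ker (!![0, 2, 0, -1] : Matrix (Fin 1) (Fin 4) ℂ).mulVecLin

variable (x : Fin 4 → ℂ)

theorem mem_line₁ : x ∈ line₁ ↔ x 2 = 0 ∧ x 3 = 0 := by
  simp [line₁, funext_iff, Fin.forall_fin_two, dotProduct, Fin.sum_univ_four]

theorem mem_line₂ : x ∈ line₂ ↔ x 0 = 0 ∧ x 1 = 0 := by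
  simp [line₂, funext_iff, Fin.forall_fin_two, dotProduct, Fin.sum_univ_four]

theorem mem_line₃ : x ∈ line₃ ↔ x 0 = x 2 ∧ x 1 = x 3 := by
  simp [line₃, funext_iff, Fin.forall_fin_two, dotProduct, Fin.sum_univ_four, ← sub_eq_add_neg,
    sub_eq_zero]

theorem mem_transversal : x ∈ transversal ↔ x 1 = 0 ∧ x 3 = 0 := by
  simp [transversal, funext_iff, Fin.forall_fin_two, dotProduct, Fin.sum_univ_four]

theorem mem_plane : x ∈ plane ↔ 2 * x 1 = x 3 := by
  simp [plane, funext_iff, dotProduct, Fin.sum_univ_four, ← sub_eq_add_neg, sub_eq_zero]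

theorem finrank_line₁ : finrank ℂ line₁ = 2 :=
  finrank_ker_mulVecLin _ !![0, 0; 0, 0; 1, 0; 0, 1] (by simp [one_fin_two])

theorem finrank_line₂ : finrank ℂ line₂ = 2 :=
  finrank_ker_mulVecLin _ !![1, 0; 0, 1; 0, 0; 0, 0] (by simp [one_fin_two])

theorem finrank_line₃ : finrank ℂ line₃ = 2 :=
  finrank_ker_mulVecLin _ !![1, 0; 0, 1; 0, 0; 0, 0] (by simp [one_fin_two])

theorem finrank_transversal : finrank ℂ transversal = 2 :=
  finrank_ker_mulVecLin _ !![0, 0; 1, 0; 0, 0; 0, 1] (by simp [one_fin_two])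

theorem finrank_plane : finrank ℂ plane = 3 :=
  finrank_ker_mulVecLin _ !![0; 0; 0; -1] (by ext i j; fin_cases i; fin_cases j; simp)

theorem line₁_inf_line₂ : line₁ ⊓ line₂ = ⊥ := by
  refine (Submodule.eq_bot_iff _).mpr fun x hx ↦ ?_
  rw [mem_inf, mem_line₁, mem_line₂] at hx
  ext i; fin_cases i <;> simp <;> grind

theorem line₁_inf_line₃ : line₁ ⊓ line₃ = ⊥ := by
  refine (Submodule.eq_bot_iff _).mpr fun x hx ↦ ?_
  rw [mem_inf, mem_line₁, mem_line₃] at hx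
  ext i; fin_cases i <;> simp <;> grind

theorem line₂_inf_line₃ : line₂ ⊓ line₃ = ⊥ := by
  refine (Submodule.eq_bot_iff _).mpr fun x hx ↦ ?_
  rw [mem_inf, mem_line₂, mem_line₃] at hx
  ext i; fin_cases i <;> simp <;> grind

theorem line₁_inf_transversal : line₁ ⊓ transversal ≠ ⊥ :=
  (Submodule.ne_bot_iff _).mpr ⟨![1, 0, 0, 0], by simp [mem_line₁, mem_transversal], by simp⟩

theorem line₂_inf_transversal : line₂ ⊓ transversal ≠ ⊥ :=
  (Submodule.ne_bot_iff _).mpr ⟨![0, 0, 1, 0], by simp [mem_line₂, mem_transversal], by simp⟩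

theorem line₃_inf_transversal : line₃ ⊓ transversal ≠ ⊥ :=
  (Submodule.ne_bot_iff _).mpr ⟨![1, 0, 1, 0], by simp [mem_line₃, mem_transversal], by simp⟩

theorem transversal_le_plane : transversal ≤ plane := fun x hx ↦ by
  rw [mem_transversal] at hx
  simp [mem_plane, hx]

theorem line₁_not_le_plane : ¬ line₁ ≤ plane :=
  fun h ↦ by simpa [mem_line₁, mem_plane] using h (x := ![0, 1, 0, 0])

theorem line₂_not_le_plane : ¬ line₂ ≤ plane :=
  fun h ↦ by simpa [mem_line₂, mem_plane] using h (x := ![0, 0, 0, 1])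

theorem line₃_not_le_plane : ¬ line₃ ≤ plane :=
  fun h ↦ by simpa [mem_line₃, mem_plane] using h (x := ![0, 1, 0, 1])

end SkewLinesExample

/-- **Strict growth fails for reducible curves.** There is a smooth, pure-dimensional,
nondegenerate, reduced curve `C ⊆ ℙ³` — the union of three pairwise skew lines
`L₁, L₂, L₃` all meeting a fourth line `L` — whose sequence of secant indices is
`𝔏(C) = (1, 3, 3)`, which is not strictly increasing. -/
theorem stmt_5 :
    ∃ W W₁ W₂ W₃ : Submodule ℂ (Fin 4 → ℂ),
      Module.finrank ℂ W = 2 ∧ Module.finrank ℂ W₁ = 2 ∧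
      Module.finrank ℂ W₂ = 2 ∧ Module.finrank ℂ W₃ = 2 ∧
      W₁ ⊓ W₂ = ⊥ ∧ W₁ ⊓ W₃ = ⊥ ∧ W₂ ⊓ W₃ = ⊥ ∧
      W₁ ⊓ W ≠ ⊥ ∧ W₂ ⊓ W ≠ ⊥ ∧ W₃ ⊓ W ≠ ⊥ ∧
      W₁ ⊔ W₂ ⊔ W₃ = ⊤ ∧
      secIdxLines W₁ W₂ W₃ 0 = 1 ∧
      secIdxLines W₁ W₂ W₃ 1 = 3 ∧
      secIdxLines W₁ W₂ W₃ 2 = 3 := by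
  open SkewLinesExample in
  have h₁₂ : line₁ ⊔ line₂ = ⊤ := sup_eq_top_of_inf_eq_bot
    (by simp [finrank_line₁, finrank_line₂]) line₁_inf_line₂
  exact ⟨transversal, line₁, line₂, line₃, finrank_transversal, finrank_line₁, finrank_line₂,
    finrank_line₃, line₁_inf_line₂, line₁_inf_line₃, line₂_inf_line₃, line₁_inf_transversal,
    line₂_inf_transversal, line₃_inf_transversal, top_unique (h₁₂ ▸ le_sup_left),
    secIdxLines_of_transversal finrank_line₁ finrank_line₂ finrank_line₃ line₁_inf_line₂
      line₁_inf_line₃ line₂_inf_line₃ line₁_inf_transversal line₂_inf_transversal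
      line₃_inf_transversal finrank_transversal finrank_plane transversal_le_plane
      line₁_not_le_plane line₂_not_le_plane line₃_not_le_plane⟩

end
end

section
/- Let $I = (x_0^d, \ldots, x_{n-1}^d, m_1, \ldots, m_r)$ be a monomial ideal in $k[x_0,\ldots,x_{n-1}]$ with $\deg(m_j) \le d$ for each $j$. Then $\dim_k k[x_0,\ldots,x_{n-1}]/I = \dim_k k[x_0,\ldots,x_{n-1}]/(\phi_n(x_0^d),\ldots,\phi_n(x_{n-1}^d), \phi_n(m_1),\ldots,\phi_n(m_r))$. -/
open MvPolynomial

/-- The map `φₙ` sending a monomial with exponent vector `e` to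
`∏ i ∏_{j=1}^{e i} (xᵢ - j)`. -/
noncomputable def phi (n : ℕ) (e : Fin n → ℕ) : MvPolynomial (Fin n) ℂ :=
  ∏ i, ∏ j ∈ Finset.range (e i), (X i - C ((j : ℂ) + 1))

/-! Both quotients have dimension equal to the number of *standard* exponents, those not
dominated by the exponent of any generator. For the monomial ideal the standard monomials form a
basis of the quotient. Each `φₙ(x^e)` is monic with leading exponent `e` for every monomial order,
so by multivariate division the standard monomials still span the second quotient. There the
classes of `φₙ(x^e)`, `e` standard, are linearly independent because evaluation at the points
`e + 1` is triangular: `φₙ(x^e)` vanishes at `e' + 1` unless `e ≤ e'`, so every generator vanishes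
at all these points while `φₙ(x^e)` does not vanish at `e + 1`. -/

def standardExponents {ι σ : Type*} (a : ι → σ →₀ ℕ) : Set (σ →₀ ℕ) :=
  {s | ∀ i, ¬ a i ≤ s}

theorem finite_standardExponents_sumElim_single {ι σ : Type*} [Finite σ] (d : ℕ)
    (b : ι → σ →₀ ℕ) :
    (standardExponents (Sum.elim (fun j : σ => Finsupp.single j d) b)).Finite := by
  classical
  refine (Set.finite_Iic (Finsupp.equivFunOnFinite.symm fun _ => d)).subset fun s hs => ?_
  intro j
  have := hs (Sum.inl j)
  simp only [Sum.elim_inl, Finsupp.single_le_iff, not_le] at this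
  simpa using this.le

theorem finrank_eq_card_of_span_eq_top_of_linearIndependent {R M ι : Type*} [Semiring R]
    [StrongRankCondition R] [AddCommMonoid M] [Module R M] [Finite ι] {v w : ι → M}
    (hv : Submodule.span R (Set.range v) = ⊤) (hw : LinearIndependent R w) :
    Module.finrank R M = Nat.card ι := by
  have := Fintype.ofFinite ι
  have : Module.Finite R M := ⟨⟨(Set.finite_range v).toFinset, by simpa using hv⟩⟩
  rw [Nat.card_eq_fintype_card]
  exact (finrank_le_of_span_eq_top hv).antisymm hw.fintype_card_le_finrank

theorem linearIndependent_of_triangular {R M ι : Type*} [Ring R] [NoZeroDivisors R]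
    [AddCommGroup M] [Module R M] [PartialOrder ι] [WellFoundedLT ι] {v : ι → M}
    (φ : ι → M →ₗ[R] R) (hdiag : ∀ i, φ i (v i) ≠ 0) (htri : ∀ i j, φ j (v i) ≠ 0 → i ≤ j) :
    LinearIndependent R v := by
  rw [linearIndependent_iff']
  intro s c hsum i
  induction i using WellFoundedLT.induction with
  | _ i ih =>
  intro hi
  have hφ : ∑ j ∈ s, c j * φ i (v j) = 0 := by simpa using congrArg (φ i) hsum
  rw [Finset.sum_eq_single i _ (absurd hi)] at hφ
  · exact (mul_eq_zero.1 hφ).resolve_right (hdiag i)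
  · intro j hj hji
    by_cases h : φ i (v j) = 0
    · rw [h, mul_zero]
    · rw [ih j ((htri j i h).lt_of_ne hji) hj, zero_mul]

section Quotient

variable {σ R ι : Type*} [CommRing R]

theorem mk_monomial_eq_smul (J : Ideal (MvPolynomial σ R)) (s : σ →₀ ℕ) (c : R) :
    Ideal.Quotient.mk J (monomial s c) = c • Ideal.Quotient.mk J (monomial s 1) := by
  rw [← Ideal.Quotient.mkₐ_eq_mk R, ← map_smul, smul_monomial, smul_eq_mul, mul_one]

theorem mk_mem_span_mk_monomial_of_support_subset {J : Ideal (MvPolynomial σ R)}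
    {S : Set (σ →₀ ℕ)} {p : MvPolynomial σ R} (hp : ↑p.support ⊆ S) :
    Ideal.Quotient.mk J p ∈
      Submodule.span R (Set.range fun s : S => Ideal.Quotient.mk J (monomial (s : σ →₀ ℕ) 1)) := by
  rw [p.as_sum, map_sum]
  refine Submodule.sum_mem _ fun u hu => ?_
  rw [mk_monomial_eq_smul]
  exact Submodule.smul_mem _ _ (Submodule.subset_span ⟨⟨u, hp hu⟩, rfl⟩)

theorem span_mk_monomial_standardExponents_eq_top (a : ι → σ →₀ ℕ) :
    Submodule.span R (Set.range fun s : standardExponents a =>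
      Ideal.Quotient.mk (Ideal.span (Set.range fun i => monomial (a i) (1 : R)))
        (monomial (s : σ →₀ ℕ) 1)) = ⊤ := by
  rw [eq_top_iff]
  rintro x -
  obtain ⟨p, rfl⟩ := Ideal.Quotient.mk_surjective x
  rw [p.as_sum, map_sum]
  refine Submodule.sum_mem _ fun u _ => ?_
  by_cases hu : u ∈ standardExponents a
  · exact mk_mem_span_mk_monomial_of_support_subset
      fun v hv => (Finset.mem_singleton.1 (support_monomial_subset hv)) ▸ hu
  · obtain ⟨i, hi⟩ : ∃ i, a i ≤ u := by simpa [standardExponents] using hu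
    rw [Ideal.Quotient.eq_zero_iff_mem.2]
    · exact zero_mem _
    rw [← tsub_add_cancel_of_le hi, ← mul_one (coeff _ p), ← monomial_mul]
    exact Ideal.mul_mem_left _ _ (Ideal.subset_span ⟨i, rfl⟩)

theorem linearIndependent_mk_monomial_standardExponents (a : ι → σ →₀ ℕ) :
    LinearIndependent R fun s : standardExponents a =>
      Ideal.Quotient.mk (Ideal.span (Set.range fun i => monomial (a i) (1 : R)))
        (monomial (s : σ →₀ ℕ) 1) := by
  rw [linearIndependent_iff']
  intro t c hsum s hs
  set p := ∑ u ∈ t, monomial (u : σ →₀ ℕ) (c u)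
  have hp : p ∈ Ideal.span ((fun s => monomial s (1 : R)) '' Set.range a) := by
    rw [← Set.range_comp, ← Ideal.Quotient.eq_zero_iff_mem, ← hsum, map_sum]
    exact Finset.sum_congr rfl fun u _ => mk_monomial_eq_smul _ _ _
  have hcoeff : coeff s p = c s := by
    classical
    simp only [p, coeff_sum, coeff_monomial, Subtype.val_inj]
    rw [Finset.sum_ite_eq_of_mem' t s c hs]
  by_contra hcs
  obtain ⟨_, ⟨i, rfl⟩, hi⟩ :=
    mem_ideal_span_monomial_image.1 hp s (mem_support_iff.2 (hcoeff ▸ hcs))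
  exact s.2 i hi

theorem MonomialOrder.span_mk_monomial_standardExponents_eq_top (m : MonomialOrder σ)
    {f : ι → MvPolynomial σ R} {a : ι → σ →₀ ℕ} (hf : ∀ i, IsUnit (m.leadingCoeff (f i)))
    (hdeg : ∀ i, m.degree (f i) = a i) :
    Submodule.span R (Set.range fun s : standardExponents a =>
      Ideal.Quotient.mk (Ideal.span (Set.range f)) (monomial (s : σ →₀ ℕ) 1)) = ⊤ := by
  rw [eq_top_iff]
  rintro x -
  obtain ⟨p, rfl⟩ := Ideal.Quotient.mk_surjective x
  obtain ⟨g, r, hpr, -, hr⟩ := m.div hf p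
  have hmk : Ideal.Quotient.mk (Ideal.span (Set.range f)) p = Ideal.Quotient.mk _ r := by
    rw [Ideal.Quotient.mk_eq_mk_iff_sub_mem, hpr, add_sub_cancel_right]
    exact (Finsupp.range_linearCombination _ (v := f)).le ⟨g, rfl⟩
  rw [hmk]
  exact mk_mem_span_mk_monomial_of_support_subset fun u hu i => hdeg i ▸ hr u hu i

theorem finrank_quotient_span_monomial {K : Type*} [Field K] (a : ι → σ →₀ ℕ)
    (ha : (standardExponents a).Finite) :
    Module.finrank K (MvPolynomial σ K ⧸ Ideal.span (Set.range fun i => monomial (a i) (1 : K))) =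
      Nat.card (standardExponents a) :=
  have := ha.to_subtype
  finrank_eq_card_of_span_eq_top_of_linearIndependent
    (span_mk_monomial_standardExponents_eq_top a) (linearIndependent_mk_monomial_standardExponents a)

end Quotient

section Phi

variable {n : ℕ}

theorem monic_phi (m : MonomialOrder (Fin n)) (e : Fin n → ℕ) : m.Monic (phi n e) :=
  .prod fun i _ => .prod fun _ _ => m.monic_X_sub_C i _

theorem degree_phi (m : MonomialOrder (Fin n)) (s : Fin n →₀ ℕ) : m.degree (phi n s) = s := by
  have hfactor (i : Fin n) (k : ℕ) :
      m.degree (∏ j ∈ Finset.range k, (X i - C ((j : ℂ) + 1))) = Finsupp.single i k := by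
    rw [m.degree_prod fun _ _ => (m.monic_X_sub_C _ _).ne_zero,
      Finset.sum_congr rfl fun _ _ => m.degree_X_sub_C _ _]
    simp
  rw [phi, m.degree_prod (P := fun i => ∏ j ∈ Finset.range (s i), (X i - C ((j : ℂ) + 1)))
    fun i _ => (MonomialOrder.Monic.prod fun _ _ => m.monic_X_sub_C i _).ne_zero]
  simp_rw [hfactor]
  exact Finsupp.univ_sum_single s

theorem eval_phi_ne_zero_iff (e t : Fin n → ℕ) :
    eval (fun i => (t i : ℂ) + 1) (phi n e) ≠ 0 ↔ e ≤ t := by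
  simp only [phi, map_prod, eval_sub, eval_X, eval_C, ne_eq, Finset.prod_eq_zero_iff,
    Finset.mem_univ, Finset.mem_range, true_and, not_exists, not_and, sub_eq_zero, add_left_inj,
    Nat.cast_inj, Pi.le_def]
  exact forall_congr' fun i => ⟨fun h => not_lt.1 fun hlt => h _ hlt rfl, fun h j hj => by omega⟩

theorem linearIndependent_mk_phi_standardExponents {ι : Type*} (a : ι → Fin n →₀ ℕ) :
    LinearIndependent ℂ fun s : standardExponents a =>
      Ideal.Quotient.mk (Ideal.span (Set.range fun i => phi n (a i))) (phi n s) := by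
  set J := Ideal.span (Set.range fun i => phi n (a i))
  let pt (t : Fin n →₀ ℕ) : Fin n → ℂ := fun i => (t i : ℂ) + 1
  have hJ (t : standardExponents a) : ∀ p ∈ J, aeval (pt t) p = 0 := by
    intro p hp
    refine (Ideal.span_le (I := RingHom.ker (aeval (pt t))).2 ?_ hp : _)
    rintro _ ⟨i, rfl⟩
    change eval (pt t) (phi n (a i)) ∈ ({0} : Set ℂ)
    by_contra h
    exact t.2 i (Finsupp.coe_le_coe.1 ((eval_phi_ne_zero_iff _ _).1 h))
  refine linearIndependent_of_triangular
    (fun t => (Ideal.Quotient.liftₐ J (aeval (pt t)) (hJ t)).toLinearMap) (fun s => ?_)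
    (fun s t h => ?_)
  · change eval (pt s) (phi n s) ≠ 0
    exact (eval_phi_ne_zero_iff _ _).2 le_rfl
  · exact Finsupp.coe_le_coe.1 ((eval_phi_ne_zero_iff _ _).1 h)

theorem finrank_quotient_span_phi {ι : Type*} (a : ι → Fin n →₀ ℕ)
    (ha : (standardExponents a).Finite) :
    Module.finrank ℂ (MvPolynomial (Fin n) ℂ ⧸ Ideal.span (Set.range fun i => phi n (a i))) =
      Nat.card (standardExponents a) :=
  have := ha.to_subtype
  let m : MonomialOrder (Fin n) := .lex
  finrank_eq_card_of_span_eq_top_of_linearIndependent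
    (m.span_mk_monomial_standardExponents_eq_top
      (fun _ => (monic_phi m _).leadingCoeff_eq_one ▸ isUnit_one) fun i => degree_phi m (a i))
    (linearIndependent_mk_phi_standardExponents a)

end Phi

theorem stmt_7_general (n d r : ℕ) (m : Fin r → (Fin n → ℕ)) :
    Module.finrank ℂ
      (MvPolynomial (Fin n) ℂ ⧸
        Ideal.span ((Set.range fun i : Fin n => (X i : MvPolynomial (Fin n) ℂ) ^ d) ∪
          (Set.range fun j : Fin r =>
            monomial (Finsupp.equivFunOnFinite.symm (m j)) (1 : ℂ)))) =
    Module.finrank ℂ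
      (MvPolynomial (Fin n) ℂ ⧸
        Ideal.span ((Set.range fun i : Fin n =>
            phi n (fun i' => if i' = i then d else 0)) ∪
          (Set.range fun j : Fin r => phi n (m j)))) := by
  set a : Fin n ⊕ Fin r → Fin n →₀ ℕ :=
    Sum.elim (fun i => Finsupp.single i d) fun j => Finsupp.equivFunOnFinite.symm (m j)
  have hmonomial : (Set.range fun i : Fin n => (X i : MvPolynomial (Fin n) ℂ) ^ d) ∪
      (Set.range fun j => monomial (Finsupp.equivFunOnFinite.symm (m j)) (1 : ℂ)) =
      Set.range fun k => monomial (a k) 1 := by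
    rw [← Set.Sum.elim_range]
    congr 1
    funext k
    rcases k with i | j <;> simp [a, X_pow_eq_monomial]
  have hphi : (Set.range fun i : Fin n => phi n (fun i' => if i' = i then d else 0)) ∪
      (Set.range fun j => phi n (m j)) = Set.range fun k => phi n (a k) := by
    rw [← Set.Sum.elim_range]
    congr 1
    funext k
    rcases k with i | j
    · simp only [a, Sum.elim_inl]
      congr 1
      funext i'
      simp [Finsupp.single_apply, eq_comm]
    · simp [a]
  have ha := finite_standardExponents_sumElim_single d fun j => Finsupp.equivFunOnFinite.symm (m j)
  rw [hmonomial, hphi, finrank_quotient_span_monomial a ha, finrank_quotient_span_phi a ha]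

/-- **Collapsing reducible hypersurfaces preserves colength.** For a monomial ideal
`I = (x₀^d,…,x_{n-1}^d, m₁,…,m_r)` with `deg mⱼ ≤ d`, the quotient by `I` and the
quotient by `(φₙ(x₀^d),…,φₙ(x_{n-1}^d), φₙ(m₁),…,φₙ(m_r))` have the same dimension
as `k`-vector spaces. -/
theorem stmt_7 (n d r : ℕ) (m : Fin r → (Fin n → ℕ))
    (hdeg : ∀ j, (∑ i, m j i) ≤ d) :
    Module.finrank ℂ
      (MvPolynomial (Fin n) ℂ ⧸
        Ideal.span ((Set.range fun i : Fin n => (X i : MvPolynomial (Fin n) ℂ) ^ d) ∪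
          (Set.range fun j : Fin r =>
            monomial (Finsupp.equivFunOnFinite.symm (m j)) (1 : ℂ)))) =
    Module.finrank ℂ
      (MvPolynomial (Fin n) ℂ ⧸
        Ideal.span ((Set.range fun i : Fin n =>
            phi n (fun i' => if i' = i then d else 0)) ∪
          (Set.range fun j : Fin r => phi n (m j)))) :=
  stmt_7_general n d r m
end

section
/- If $a_1, \ldots, a_r$ are distinct monomials of degree $\le d$ in $k[x_0,\ldots,x_{n-1}]$, none equal to a pure power $x_i^d$, such that $a_j$ does not divide $a_i$ for all $i > j$, then the dimensions $\dim_k k[x_0,\ldots,x_{n-1}]/((x_0^d,\ldots,x_{n-1}^d) + (a_1,\ldots,a_j))$ are strictly decreasing in $j$ for $j = 0, 1, \ldots, r$. -/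
/-!
Monomial ideals are described by exponent vectors: a monomial lies in the ideal spanned by
monomials `x^s, s ∈ S` iff some `s ∈ S` lies below its exponent. Once all `xᵢ^d` are among the
generators, the quotient is spanned by the finitely many monomials of exponent `≤ (d,…,d)`, so it
is finite-dimensional, and enlarging the ideal properly strictly lowers its dimension. The monomial
`aⱼ` is a generator of the `(j+1)`-st ideal but not in the `j`-th: no `xᵢ^d` divides it because
its degree is `≤ d` and it is not a pure power, and no earlier `aₜ` divides it by hypothesis.
-/

open MvPolynomial

theorem Fintype.lt_of_sum_le_of_ne_piSingle {ι : Type*} [Fintype ι] [DecidableEq ι]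
    {f : ι → ℕ} {d : ℕ} (hsum : ∑ i, f i ≤ d) (hf : ∀ i₀, f ≠ Pi.single i₀ d) (i : ι) :
    f i < d := by
  by_contra! hdi
  have hsplit := Finset.add_sum_erase Finset.univ f (Finset.mem_univ i)
  have hrest : ∑ j ∈ Finset.univ.erase i, f j = 0 := by omega
  refine hf i (funext fun j => ?_)
  rcases eq_or_ne j i with rfl | hji
  · rw [Pi.single_eq_same]
    omega
  · rw [Pi.single_eq_of_ne hji]
    exact Finset.sum_eq_zero_iff.mp hrest j (Finset.mem_erase.mpr ⟨hji, Finset.mem_univ j⟩)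

theorem Ideal.finrank_quotient_lt_of_lt {k R : Type*} [Field k] [CommRing R] [Algebra k R]
    {I J : Ideal R} [FiniteDimensional k (R ⧸ I)] (h : I < J) :
    Module.finrank k (R ⧸ J) < Module.finrank k (R ⧸ I) := by
  obtain ⟨hle, x, hxJ, hxI⟩ := SetLike.lt_iff_le_and_exists.mp h
  let φ : (R ⧸ I) →ₗ[k] (R ⧸ J) := (Ideal.Quotient.liftₐ I (Ideal.Quotient.mkₐ k J)
    fun y hy => Ideal.Quotient.eq_zero_iff_mem.mpr (hle hy)).toLinearMap
  have hφ : Function.Surjective φ := by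
    intro y
    obtain ⟨p, rfl⟩ := Ideal.Quotient.mk_surjective y
    exact ⟨Ideal.Quotient.mk I p, rfl⟩
  have : FiniteDimensional k (R ⧸ J) := Module.Finite.of_surjective φ hφ
  refine (φ.finrank_le_finrank_of_surjective hφ).lt_of_ne fun heq => hxI ?_
  have hinj := (LinearMap.injective_iff_surjective_of_finrank_eq_finrank heq.symm).mpr hφ
  exact Ideal.Quotient.eq_zero_iff_mem.mp
    ((injective_iff_map_eq_zero φ).mp hinj _ (Ideal.Quotient.eq_zero_iff_mem.mpr hxJ))

namespace MvPolynomial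

theorem monomial_one_mem_ideal_span_monomial_image_iff {σ R : Type*} [CommSemiring R]
    [Nontrivial R] {s : Set (σ →₀ ℕ)} {v : σ →₀ ℕ} :
    monomial v (1 : R) ∈ Ideal.span ((fun s => monomial s (1 : R)) '' s) ↔ ∃ si ∈ s, si ≤ v := by
  classical
  rw [mem_ideal_span_monomial_image, support_monomial, if_neg one_ne_zero]
  simp

theorem finiteDimensional_quotient_span_monomial {σ k : Type*} [Field k] [Finite σ] (d : ℕ)
    {s : Set (σ →₀ ℕ)} (hs : ∀ i, Finsupp.single i d ∈ s) :
    FiniteDimensional k (MvPolynomial σ k ⧸ Ideal.span ((fun s => monomial s (1 : k)) '' s)) := by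
  classical
  set I := Ideal.span ((fun s => monomial s (1 : k)) '' s)
  let bound : σ →₀ ℕ := Finsupp.equivFunOnFinite.symm fun _ => d
  let B := (fun v => Ideal.Quotient.mkₐ k I (monomial v 1)) '' Set.Icc 0 bound
  refine ⟨Submodule.fg_def.mpr ⟨B, (Set.finite_Icc 0 bound).image _, ?_⟩⟩
  refine Submodule.eq_top_iff'.mpr fun x => ?_
  obtain ⟨p, rfl⟩ := Ideal.Quotient.mkₐ_surjective k I x
  induction p using MvPolynomial.induction_on' with
  | monomial v c =>
    rw [← mul_one c, ← smul_eq_mul, ← smul_monomial, map_smul]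
    refine Submodule.smul_mem _ _ ?_
    by_cases hv : v ≤ bound
    · exact Submodule.subset_span ⟨v, ⟨zero_le, hv⟩, rfl⟩
    · obtain ⟨i, hi⟩ : ∃ i, d < v i := by simpa [Finsupp.le_def, bound] using hv
      have hmem : monomial v (1 : k) ∈ I :=
        monomial_one_mem_ideal_span_monomial_image_iff.mpr
          ⟨_, hs i, Finsupp.single_le_iff.mpr hi.le⟩
      rw [Ideal.Quotient.mkₐ_eq_mk, Ideal.Quotient.eq_zero_iff_mem.mpr hmem]
      exact zero_mem _
  | add p q hp hq =>
    rw [map_add]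
    exact add_mem hp hq

theorem finrank_quotient_span_monomial_lt {σ k : Type*} [Field k] [Finite σ] (d : ℕ)
    {s t : Set (σ →₀ ℕ)} (hs : ∀ i, Finsupp.single i d ∈ s) (hst : s ⊆ t) {v : σ →₀ ℕ}
    (hvt : v ∈ t) (hvs : ∀ si ∈ s, ¬ si ≤ v) :
    Module.finrank k (MvPolynomial σ k ⧸ Ideal.span ((fun s => monomial s (1 : k)) '' t)) <
      Module.finrank k (MvPolynomial σ k ⧸ Ideal.span ((fun s => monomial s (1 : k)) '' s)) := by
  have := finiteDimensional_quotient_span_monomial (k := k) d hs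
  refine Ideal.finrank_quotient_lt_of_lt (SetLike.lt_iff_le_and_exists.mpr
    ⟨Ideal.span_mono (Set.image_mono hst), monomial v 1, Ideal.subset_span ⟨v, hvt, rfl⟩, ?_⟩)
  rw [monomial_one_mem_ideal_span_monomial_image_iff]
  exact fun ⟨si, hsi, hle⟩ => hvs si hsi hle

end MvPolynomial

theorem stmt_11_general (n d r : ℕ) (k : Type*) [Field k]
    (a : Fin r → (Fin n → ℕ))
    (hdeg : ∀ j, (∑ i, a j i) ≤ d)
    (hpp : ∀ j i₀, a j ≠ fun i => if i = i₀ then d else 0)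
    (hdiv : ∀ i j, j < i → ¬ (∀ t, a j t ≤ a i t)) :
    StrictAnti (fun j : Fin (r + 1) =>
      Module.finrank k (MvPolynomial (Fin n) k ⧸
        Ideal.span ((Set.range fun i : Fin n => (X i : MvPolynomial (Fin n) k) ^ d) ∪
          ((fun t : Fin r => monomial (Finsupp.equivFunOnFinite.symm (a t)) (1 : k)) ''
            {t : Fin r | (t : ℕ) < (j : ℕ)})))) := by
  let exponents (m : ℕ) : Set (Fin n →₀ ℕ) := Set.range (fun i => Finsupp.single i d) ∪
    (fun t => Finsupp.equivFunOnFinite.symm (a t)) '' {t : Fin r | (t : ℕ) < m}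
  have hgens (m : ℕ) : (Set.range fun i : Fin n => (X i : MvPolynomial (Fin n) k) ^ d) ∪
      (fun t : Fin r => monomial (Finsupp.equivFunOnFinite.symm (a t)) (1 : k)) ''
        {t : Fin r | (t : ℕ) < m} = (fun s => monomial s (1 : k)) '' exponents m := by
    simp only [exponents, Set.image_union, ← Set.range_comp, Set.image_image, Function.comp_def,
      X_pow_eq_monomial]
  have hlt (j : Fin r) (i : Fin n) : a j i < d :=
    Fintype.lt_of_sum_le_of_ne_piSingle (hdeg j)
      (fun i₀ h => hpp j i₀ (h.trans (funext fun i => Pi.single_apply i₀ d i))) i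
  rw [Fin.strictAnti_iff_succ_lt]
  intro j
  rw [hgens, hgens]
  refine finrank_quotient_span_monomial_lt d (fun i => Set.mem_union_left _ ⟨i, rfl⟩)
    (Set.union_subset_union_right _ (Set.image_mono fun t ht => Nat.lt_succ_of_lt ht))
    (Set.mem_union_right _ ⟨j, Nat.lt_succ_self _, rfl⟩) ?_
  rintro _ (⟨i, rfl⟩ | ⟨t, ht, rfl⟩) hle
  · exact (hlt j i).not_ge (by simpa using Finsupp.single_le_iff.mp hle)
  · exact hdiv j t ht fun i => by simpa using hle i

/-- **Strictly decreasing dimensions.** If `a₁,…,a_r` are distinct monomials of degree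
`≤ d` in `n` variables, none a pure power `xᵢ^d`, with `aⱼ ∤ aᵢ` for `i > j`, then the
dimensions of `k[x₀,…,x_{n-1}]/((x₀^d,…,x_{n-1}^d) + (a₁,…,aⱼ))` strictly decrease in
`j = 0,…,r`. -/
theorem stmt_11 (n d r : ℕ) (k : Type*) [Field k] (hn : 1 ≤ n) (hd : 1 ≤ d)
    (a : Fin r → (Fin n → ℕ)) (hinj : Function.Injective a)
    (hdeg : ∀ j, (∑ i, a j i) ≤ d)
    (hpp : ∀ j i₀, a j ≠ fun i => if i = i₀ then d else 0)
    (hdiv : ∀ i j, j < i → ¬ (∀ t, a j t ≤ a i t)) :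
    StrictAnti (fun j : Fin (r + 1) =>
      Module.finrank k (MvPolynomial (Fin n) k ⧸
        Ideal.span ((Set.range fun i : Fin n => (X i : MvPolynomial (Fin n) k) ^ d) ∪
          ((fun t : Fin r => monomial (Finsupp.equivFunOnFinite.symm (a t)) (1 : k)) ''
            {t : Fin r | (t : ℕ) < (j : ℕ)})))) :=
  stmt_11_general n d r k a hdeg hpp hdiv
end

section
/- Let $Y$ be the set of $3$ points on a line $T \subseteq \mathbb{P}^3$ union $5$ points on a plane $H \subseteq \mathbb{P}^3$, where $T \not\subseteq H$, none of the $3$ points equals $T \cap H$, no three of the $5$ points are collinear, and no two of the $5$ points are collinear with $T \cap H$. Then the term-wise maximal sequence $(\max_L |Y \cap L_0|, \max_L |Y \cap L_1|, \max_L |Y \cap L_2|, |Y|)$ over linear subvarieties $L_j \subseteq \mathbb{P}^3$ of dimension $j$ equals $(1, 3, 5, 8)$, while the maximum over nested chains $L_0 \subseteq L_1 \subseteq L_2 \subseteq \mathbb{P}^3$ (with respect to the reverse-lexicographic total order on sequences) equals $(1, 2, 5, 8)$; in particular these two sequences differ. -/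
noncomputable section

/-- Number of points of the configuration `Y` (points recorded as 1-dimensional
subspaces of `ℂ⁴`) lying in the linear subvariety determined by a subspace `M`. -/
def cnt (Y : Set (Submodule ℂ (Fin 4 → ℂ))) (M : Submodule ℂ (Fin 4 → ℂ)) : ℕ :=
  (Y ∩ {y | y ≤ M}).ncard

/-- The reverse-lexicographic total order on integer sequences: `s ≤ t` iff they are
equal or there is `k` with `s k < t k` and `s j = t j` for all `j > k`. -/
def revLexLe (s t : Fin 4 → ℕ) : Prop :=
  s = t ∨ ∃ k : Fin 4, s k < t k ∧ ∀ j : Fin 4, k < j → s j = t j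

/-- **The greedy chain question has a negative answer for arbitrary point sets.**
Take `Y ⊆ ℙ³` consisting of `3` points on a line `T` and `5` points on a plane `H`,
where `T ⊄ H`, none of the `3` points is `T ∩ H`, no three of the `5` points are
collinear, and no two of the `5` points are collinear with `T ∩ H`. Then the
term-wise maximal sequence `(max |Y ∩ L₀|, max |Y ∩ L₁|, max |Y ∩ L₂|, |Y|)` is
`(1, 3, 5, 8)`, while the maximum over nested chains `L₀ ⊆ L₁ ⊆ L₂` (in the
reverse-lexicographic total order) is `(1, 2, 5, 8)`; in particular the two
sequences differ. -/
theorem stmt_17 (T H : Submodule ℂ (Fin 4 → ℂ))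
    (hT : Module.finrank ℂ T = 2) (hH : Module.finrank ℂ H = 3)
    (hTH : ¬ T ≤ H)
    (p : Fin 3 → Submodule ℂ (Fin 4 → ℂ)) (q : Fin 5 → Submodule ℂ (Fin 4 → ℂ))
    (hp1 : ∀ i, Module.finrank ℂ (p i) = 1) (hq1 : ∀ i, Module.finrank ℂ (q i) = 1)
    (hpT : ∀ i, p i ≤ T) (hqH : ∀ i, q i ≤ H)
    (hpinj : Function.Injective p) (hqinj : Function.Injective q)
    (hpq : ∀ i j, p i ≠ q j)
    (hpZ : ∀ i, p i ≠ T ⊓ H)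
    (hq3 : ∀ i j l : Fin 5, i ≠ j → i ≠ l → j ≠ l →
      Module.finrank ℂ ((q i ⊔ q j ⊔ q l : Submodule ℂ (Fin 4 → ℂ))) = 3)
    (hqZ : ∀ i j : Fin 5, i ≠ j → ¬ T ⊓ H ≤ q i ⊔ q j) :
    (∀ j : Fin 4,
      sSup {c | ∃ M : Submodule ℂ (Fin 4 → ℂ), Module.finrank ℂ M = (j : ℕ) + 1 ∧
        cnt (Set.range p ∪ Set.range q) M = c} = ![1, 3, 5, 8] j) ∧
    (![1, 2, 5, 8] ∈ {s : Fin 4 → ℕ |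
        ∃ M₀ M₁ M₂ : Submodule ℂ (Fin 4 → ℂ), M₀ ≤ M₁ ∧ M₁ ≤ M₂ ∧
          Module.finrank ℂ M₀ = 1 ∧ Module.finrank ℂ M₁ = 2 ∧
          Module.finrank ℂ M₂ = 3 ∧
          s 0 = cnt (Set.range p ∪ Set.range q) M₀ ∧
          s 1 = cnt (Set.range p ∪ Set.range q) M₁ ∧
          s 2 = cnt (Set.range p ∪ Set.range q) M₂ ∧
          s 3 = (Set.range p ∪ Set.range q).ncard} ∧
      ∀ s ∈ {s : Fin 4 → ℕ |
        ∃ M₀ M₁ M₂ : Submodule ℂ (Fin 4 → ℂ), M₀ ≤ M₁ ∧ M₁ ≤ M₂ ∧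
          Module.finrank ℂ M₀ = 1 ∧ Module.finrank ℂ M₁ = 2 ∧
          Module.finrank ℂ M₂ = 3 ∧
          s 0 = cnt (Set.range p ∪ Set.range q) M₀ ∧
          s 1 = cnt (Set.range p ∪ Set.range q) M₁ ∧
          s 2 = cnt (Set.range p ∪ Set.range q) M₂ ∧
          s 3 = (Set.range p ∪ Set.range q).ncard},
        revLexLe s ![1, 2, 5, 8]) ∧
    (![1, 3, 5, 8] : Fin 4 → ℕ) ≠ ![1, 2, 5, 8] := by
  classical
  set Y : Set (Submodule ℂ (Fin 4 → ℂ)) := Set.range p ∪ Set.range q with hYdef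
  have hV : Module.finrank ℂ (Fin 4 → ℂ) = 4 := Module.finrank_fin_fun ℂ
  have hle4 : ∀ M : Submodule ℂ (Fin 4 → ℂ), Module.finrank ℂ M ≤ 4 := by
    intro M
    have h := Submodule.finrank_le M
    omega
  -- rank of T ⊔ H is 4
  have hTH4 : Module.finrank ℂ (T ⊔ H : Submodule ℂ (Fin 4 → ℂ)) = 4 := by
    have h1 : H < T ⊔ H :=
      lt_of_le_of_ne le_sup_right (fun h => hTH (le_sup_left.trans h.ge))
    have h2 := Submodule.finrank_lt_finrank_of_lt h1
    have h3 := hle4 (T ⊔ H)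
    omega
  -- rank of T ⊓ H is 1
  have hZ1 : Module.finrank ℂ (T ⊓ H : Submodule ℂ (Fin 4 → ℂ)) = 1 := by
    have h := Submodule.finrank_sup_add_finrank_inf_eq T H
    rw [hTH4, hT, hH] at h; omega
  have hr1 : ∀ a b : Submodule ℂ (Fin 4 → ℂ), Module.finrank ℂ a = 1 →
      Module.finrank ℂ b = 1 → a ≤ b → a = b :=
    fun a b ha hb hab => Submodule.eq_of_le_of_finrank_eq hab (ha.trans hb.symm)
  have hpH : ∀ i, ¬ p i ≤ H := fun i h =>
    hpZ i (hr1 _ _ (hp1 i) hZ1 (le_inf (hpT i) h))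
  have hqT : ∀ i, ¬ q i ≤ T := by
    intro i h
    have he : q i = T ⊓ H := hr1 _ _ (hq1 i) hZ1 (le_inf h (hqH i))
    obtain ⟨j, hj⟩ := exists_ne i
    exact hqZ i j (Ne.symm hj) (he ▸ le_sup_left)
  -- sup of two distinct rank-1 subspaces has rank 2
  have hsup2 : ∀ a b : Submodule ℂ (Fin 4 → ℂ), Module.finrank ℂ a = 1 →
      Module.finrank ℂ b = 1 → a ≠ b →
      Module.finrank ℂ (a ⊔ b : Submodule ℂ (Fin 4 → ℂ)) = 2 := by
    intro a b ha hb hne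
    have h := Submodule.finrank_sup_add_finrank_inf_eq a b
    have hinfle : Module.finrank ℂ (a ⊓ b : Submodule ℂ (Fin 4 → ℂ)) ≤ 1 := by
      have := Submodule.finrank_mono (inf_le_left (a := a) (b := b))
      omega
    have hinf : Module.finrank ℂ (a ⊓ b : Submodule ℂ (Fin 4 → ℂ)) = 0 := by
      rcases Nat.lt_or_ge (Module.finrank ℂ (a ⊓ b : Submodule ℂ (Fin 4 → ℂ))) 1 with hc | hc
      · omega
      · exfalso
        have h1 : Module.finrank ℂ (a ⊓ b : Submodule ℂ (Fin 4 → ℂ)) = 1 := le_antisymm hinfle hc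
        have ea : a ⊓ b = a := hr1 _ _ h1 ha inf_le_left
        have eb : a ⊓ b = b := hr1 _ _ h1 hb inf_le_right
        exact hne (ea.symm.trans eb)
    omega
  have hppT : ∀ i j : Fin 3, i ≠ j → p i ⊔ p j = T := by
    intro i j hij
    refine Submodule.eq_of_le_of_finrank_eq (sup_le (hpT i) (hpT j)) ?_
    rw [hsup2 _ _ (hp1 i) (hp1 j) (fun h => hij (hpinj h)), hT]
  -- counting formula
  have hcnt : ∀ M : Submodule ℂ (Fin 4 → ℂ),
      cnt Y M = {i : Fin 3 | p i ≤ M}.ncard + {i : Fin 5 | q i ≤ M}.ncard := by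
    intro M
    have hset : Y ∩ {y | y ≤ M}
        = p '' {i | p i ≤ M} ∪ q '' {i | q i ≤ M} := by
      ext y
      simp only [hYdef, Set.mem_inter_iff, Set.mem_union, Set.mem_range, Set.mem_image,
        Set.mem_setOf_eq]
      constructor
      · rintro ⟨h1 | h1, h2⟩
        · obtain ⟨i, rfl⟩ := h1; exact Or.inl ⟨i, h2, rfl⟩
        · obtain ⟨i, rfl⟩ := h1; exact Or.inr ⟨i, h2, rfl⟩
      · rintro (⟨i, hi, rfl⟩ | ⟨i, hi, rfl⟩)
        exacts [⟨Or.inl ⟨i, rfl⟩, hi⟩, ⟨Or.inr ⟨i, rfl⟩, hi⟩]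
    have hdisj : Disjoint (p '' {i | p i ≤ M}) (q '' {i | q i ≤ M}) := by
      rw [Set.disjoint_left]
      rintro y ⟨i, _, rfl⟩ ⟨j, _, h⟩
      exact hpq i j h.symm
    rw [cnt, hset, Set.ncard_union_eq hdisj (Set.toFinite _) (Set.toFinite _),
      Set.ncard_image_of_injective _ hpinj, Set.ncard_image_of_injective _ hqinj]
  -- crude bounds
  have hP3 : ∀ M : Submodule ℂ (Fin 4 → ℂ), {i : Fin 3 | p i ≤ M}.ncard ≤ 3 := by
    intro M
    have := Set.ncard_le_ncard (Set.subset_univ {i : Fin 3 | p i ≤ M}) Set.finite_univ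
    simpa [Set.ncard_univ] using this
  have hQ5 : ∀ M : Submodule ℂ (Fin 4 → ℂ), {i : Fin 5 | q i ≤ M}.ncard ≤ 5 := by
    intro M
    have := Set.ncard_le_ncard (Set.subset_univ {i : Fin 5 | q i ≤ M}) Set.finite_univ
    simpa [Set.ncard_univ] using this
  -- not two p's unless T ≤ M
  have hPT : ∀ M : Submodule ℂ (Fin 4 → ℂ), ¬ T ≤ M →
      {i : Fin 3 | p i ≤ M}.ncard ≤ 1 := by
    intro M hTM
    by_contra hc
    push_neg at hc
    obtain ⟨i, j, hi, hj, hij⟩ := (Set.one_lt_ncard_iff (Set.toFinite _)).mp hc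
    exact hTM ((hppT i j hij) ▸ sup_le hi hj)
  -- not three q's in rank ≤ 2
  have hQrank2 : ∀ M : Submodule ℂ (Fin 4 → ℂ), Module.finrank ℂ M ≤ 2 →
      {i : Fin 5 | q i ≤ M}.ncard ≤ 2 := by
    intro M hM
    by_contra hc
    push_neg at hc
    obtain ⟨i, j, l, hi, hj, hl, hij, hil, hjl⟩ :=
      (Set.two_lt_ncard_iff (Set.toFinite _)).mp hc
    have hle : q i ⊔ q j ⊔ q l ≤ M := sup_le (sup_le hi hj) hl
    have := Submodule.finrank_mono hle
    rw [hq3 i j l hij hil hjl] at this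
    omega
  -- three q's in a rank-3 subspace force M = H
  have hQ3H : ∀ M : Submodule ℂ (Fin 4 → ℂ), Module.finrank ℂ M = 3 →
      2 < {i : Fin 5 | q i ≤ M}.ncard → M = H := by
    intro M hM hc
    obtain ⟨i, j, l, hi, hj, hl, hij, hil, hjl⟩ :=
      (Set.two_lt_ncard_iff (Set.toFinite _)).mp hc
    have e1 : q i ⊔ q j ⊔ q l = M :=
      Submodule.eq_of_le_of_finrank_eq (sup_le (sup_le hi hj) hl)
        ((hq3 i j l hij hil hjl).trans hM.symm)
    have e2 : q i ⊔ q j ⊔ q l = H :=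
      Submodule.eq_of_le_of_finrank_eq (sup_le (sup_le (hqH i) (hqH j)) (hqH l))
        ((hq3 i j l hij hil hjl).trans hH.symm)
    rw [← e1, e2]
  -- two q's in a rank-2 subspace containing T ⊓ H is impossible
  have hQZ2 : ∀ M : Submodule ℂ (Fin 4 → ℂ), Module.finrank ℂ M = 2 → T ⊓ H ≤ M →
      {i : Fin 5 | q i ≤ M}.ncard ≤ 1 := by
    intro M hM hZM
    by_contra hc
    push_neg at hc
    obtain ⟨i, j, hi, hj, hij⟩ := (Set.one_lt_ncard_iff (Set.toFinite _)).mp hc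
    have e1 : q i ⊔ q j = M :=
      Submodule.eq_of_le_of_finrank_eq (sup_le hi hj)
        ((hsup2 _ _ (hq1 i) (hq1 j) (fun h => hij (hqinj h))).trans hM.symm)
    exact hqZ i j hij (e1 ▸ hZM)
  -- subsingleton rank-1 bounds
  have hcnt1 : ∀ M : Submodule ℂ (Fin 4 → ℂ), Module.finrank ℂ M = 1 → cnt Y M ≤ 1 := by
    intro M hM
    rw [hcnt]
    by_cases hP : ∃ i, p i ≤ M
    · obtain ⟨i, hi⟩ := hP
      have hei : p i = M := hr1 _ _ (hp1 i) hM hi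
      have hq0 : {i : Fin 5 | q i ≤ M} = ∅ := by
        ext j
        simp only [Set.mem_setOf_eq, Set.mem_empty_iff_false, iff_false]
        intro hj
        exact hpq i j (hei.trans (hr1 _ _ (hq1 j) hM hj).symm)
      have hp1' : {i : Fin 3 | p i ≤ M}.ncard ≤ 1 := by
        rw [Set.ncard_le_one (Set.toFinite _)]
        intro a ha b hb
        exact hpinj ((hr1 _ _ (hp1 a) hM ha).trans (hr1 _ _ (hp1 b) hM hb).symm)
      rw [hq0]
      simpa using hp1'
    · push_neg at hP
      have hp0 : {i : Fin 3 | p i ≤ M} = ∅ := by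
        ext i; simpa using hP i
      have hq1' : {i : Fin 5 | q i ≤ M}.ncard ≤ 1 := by
        rw [Set.ncard_le_one (Set.toFinite _)]
        intro a ha b hb
        exact hqinj ((hr1 _ _ (hq1 a) hM ha).trans (hr1 _ _ (hq1 b) hM hb).symm)
      rw [hp0]
      simpa using hq1'
  -- rank-2 bound
  have ub2 : ∀ M : Submodule ℂ (Fin 4 → ℂ), Module.finrank ℂ M = 2 → cnt Y M ≤ 3 := by
    intro M hM
    rw [hcnt]
    by_cases hTM : T ≤ M
    · have heT : T = M := Submodule.eq_of_le_of_finrank_eq hTM (hT.trans hM.symm)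
      have hq0 : {i : Fin 5 | q i ≤ M} = ∅ := by
        ext j; simpa using fun hj => hqT j (heT ▸ hj)
      rw [hq0]
      simpa using hP3 M
    · have := hPT M hTM
      have := hQrank2 M (le_of_eq hM)
      omega
  -- rank-3 bound with equality case
  have ub3 : ∀ M : Submodule ℂ (Fin 4 → ℂ), Module.finrank ℂ M = 3 →
      cnt Y M ≤ 5 ∧ (cnt Y M = 5 → M = H) := by
    intro M hM
    rw [hcnt]
    by_cases hTM : T ≤ M
    · -- then q's lie in M ⊓ H which has rank 2 and contains T ⊓ H
      have hMH4 : Module.finrank ℂ (M ⊔ H : Submodule ℂ (Fin 4 → ℂ)) = 4 := by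
        have h1 : T ⊔ H ≤ M ⊔ H := sup_le_sup_right hTM H
        have h2 := Submodule.finrank_mono h1
        have h3 := hle4 (M ⊔ H)
        omega
      have hMH2 : Module.finrank ℂ (M ⊓ H : Submodule ℂ (Fin 4 → ℂ)) = 2 := by
        have h := Submodule.finrank_sup_add_finrank_inf_eq M H
        rw [hMH4, hM, hH] at h; omega
      have hsub : {i : Fin 5 | q i ≤ M} ⊆ {i : Fin 5 | q i ≤ M ⊓ H} := by
        intro i hi; exact le_inf hi (hqH i)
      have hq1' : {i : Fin 5 | q i ≤ M}.ncard ≤ 1 :=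
        le_trans (Set.ncard_le_ncard hsub (Set.toFinite _))
          (hQZ2 _ hMH2 (inf_le_inf_right H hTM))
      have := hP3 M
      constructor
      · omega
      · intro h; exfalso; omega
    · have hple := hPT M hTM
      by_cases hb : 2 < {i : Fin 5 | q i ≤ M}.ncard
      · have heH : M = H := hQ3H M hM hb
        have hp0 : {i : Fin 3 | p i ≤ M} = ∅ := by
          ext i; simpa using fun hi => hpH i (heH ▸ hi)
        have := hQ5 M
        rw [hp0]
        constructor
        · simpa using this
        · intro _; exact heH
      · push_neg at hb
        constructor
        · omega
        · intro h; exfalso; omega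
  -- achieved values
  have hcntT : cnt Y T = 3 := by
    rw [hcnt]
    have hp3 : {i : Fin 3 | p i ≤ T} = Set.univ := by
      ext i; simpa using hpT i
    have hq0 : {i : Fin 5 | q i ≤ T} = ∅ := by
      ext j; simpa using hqT j
    rw [hp3, hq0]
    simp [Set.ncard_univ]
  have hcntH : cnt Y H = 5 := by
    rw [hcnt]
    have hp0 : {i : Fin 3 | p i ≤ H} = ∅ := by
      ext i; simpa using hpH i
    have hq5 : {i : Fin 5 | q i ≤ H} = Set.univ := by
      ext j; simpa using hqH j
    rw [hp0, hq5]
    simp [Set.ncard_univ]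
  have hcntp0 : cnt Y (p 0) = 1 := by
    rw [hcnt]
    have hps : {i : Fin 3 | p i ≤ p 0} = {0} := by
      ext i
      simp only [Set.mem_setOf_eq, Set.mem_singleton_iff]
      constructor
      · intro hi; exact hpinj (hr1 _ _ (hp1 i) (hp1 0) hi)
      · rintro rfl; exact le_rfl
    have hq0 : {i : Fin 5 | q i ≤ p 0} = ∅ := by
      ext j
      simp only [Set.mem_setOf_eq, Set.mem_empty_iff_false, iff_false]
      intro hj
      exact hpq 0 j (hr1 _ _ (hq1 j) (hp1 0) hj).symm
    rw [hps, hq0]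
    simp
  have hcntq0 : cnt Y (q 0) = 1 := by
    rw [hcnt]
    have hp0 : {i : Fin 3 | p i ≤ q 0} = ∅ := by
      ext i
      simp only [Set.mem_setOf_eq, Set.mem_empty_iff_false, iff_false]
      intro hi
      exact hpq i 0 (hr1 _ _ (hp1 i) (hq1 0) hi)
    have hqs : {i : Fin 5 | q i ≤ q 0} = {0} := by
      ext i
      simp only [Set.mem_setOf_eq, Set.mem_singleton_iff]
      constructor
      · intro hi; exact hqinj (hr1 _ _ (hq1 i) (hq1 0) hi)
      · rintro rfl; exact le_rfl
    rw [hp0, hqs]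
    simp
  have hq01 : q 0 ≠ q 1 := fun h => by simpa using hqinj h
  have hM1rank : Module.finrank ℂ (q 0 ⊔ q 1 : Submodule ℂ (Fin 4 → ℂ)) = 2 :=
    hsup2 _ _ (hq1 0) (hq1 1) hq01
  have hM1H : (q 0 ⊔ q 1 : Submodule ℂ (Fin 4 → ℂ)) ≤ H := sup_le (hqH 0) (hqH 1)
  have hcntq01 : cnt Y (q 0 ⊔ q 1) = 2 := by
    rw [hcnt]
    have hp0 : {i : Fin 3 | p i ≤ q 0 ⊔ q 1} = ∅ := by
      ext i
      simp only [Set.mem_setOf_eq, Set.mem_empty_iff_false, iff_false]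
      intro hi
      exact hpH i (hi.trans hM1H)
    have hqs : {i : Fin 5 | q i ≤ q 0 ⊔ q 1} = {0, 1} := by
      ext i
      simp only [Set.mem_setOf_eq, Set.mem_insert_iff, Set.mem_singleton_iff]
      constructor
      · intro hi
        by_contra hc
        push_neg at hc
        have h3 := hq3 i 0 1 hc.1 hc.2 (by decide)
        have hle : q i ⊔ q 0 ⊔ q 1 ≤ q 0 ⊔ q 1 :=
          sup_le (sup_le hi le_sup_left) le_sup_right
        have := Submodule.finrank_mono hle
        rw [h3, hM1rank] at this
        omega
      · rintro (rfl | rfl)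
        · exact le_sup_left
        · exact le_sup_right
    rw [hp0, hqs]
    simp [Set.ncard_pair (show (0 : Fin 5) ≠ 1 by decide)]
  -- total count
  have hYcard : Y.ncard = 8 := by
    have hset : Y ∩ {y | y ≤ (⊤ : Submodule ℂ (Fin 4 → ℂ))} = Y := by
      simp
    have h := hcnt ⊤
    rw [cnt, hset] at h
    rw [h]
    have hp3 : {i : Fin 3 | p i ≤ (⊤ : Submodule ℂ (Fin 4 → ℂ))} = Set.univ := by
      ext i; simp
    have hq5 : {i : Fin 5 | q i ≤ (⊤ : Submodule ℂ (Fin 4 → ℂ))} = Set.univ := by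
      ext i; simp
    rw [hp3, hq5]
    simp [Set.ncard_univ]
  have hcnttop : cnt Y ⊤ = 8 := by
    rw [cnt, (by simp : Y ∩ {y | y ≤ (⊤ : Submodule ℂ (Fin 4 → ℂ))} = Y), hYcard]
  have hcnt8 : ∀ M : Submodule ℂ (Fin 4 → ℂ), cnt Y M ≤ 8 := by
    intro M
    rw [hcnt]
    have := hP3 M
    have := hQ5 M
    omega
  have hsSup : ∀ (S : Set ℕ) (n : ℕ), n ∈ S → (∀ m ∈ S, m ≤ n) → sSup S = n :=
    fun S n h1 h2 => IsGreatest.csSup_eq ⟨h1, h2⟩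
  refine ⟨?_, ⟨?_, ?_⟩, ?_⟩
  · -- term-wise maxima
    intro j
    fin_cases j
    · refine hsSup _ 1 ⟨p 0, hp1 0, hcntp0⟩ ?_
      rintro m ⟨M, hM, rfl⟩
      exact hcnt1 M hM
    · refine hsSup _ 3 ⟨T, hT, hcntT⟩ ?_
      rintro m ⟨M, hM, rfl⟩
      exact ub2 M hM
    · refine hsSup _ 5 ⟨H, hH, hcntH⟩ ?_
      rintro m ⟨M, hM, rfl⟩
      exact (ub3 M hM).1
    · refine hsSup _ 8 ⟨⊤, by rw [finrank_top, hV], hcnttop⟩ ?_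
      rintro m ⟨M, hM, rfl⟩
      exact hcnt8 M
  · -- the chain achieving (1,2,5,8)
    exact ⟨q 0, q 0 ⊔ q 1, H, le_sup_left, hM1H, hq1 0, hM1rank, hH,
      by simp [hcntq0], by simp [hcntq01], by simp [hcntH], by simp [hYcard]⟩
  · -- maximality over chains
    rintro s ⟨M₀, M₁, M₂, h01, h12, hr0, hr1', hr2, e0, e1, e2, e3⟩
    have hs3 : s 3 = 8 := by rw [e3]; exact hYcard
    have hs2le : s 2 ≤ 5 := by rw [e2]; exact (ub3 M₂ hr2).1
    have hs0le : s 0 ≤ 1 := by rw [e0]; exact hcnt1 M₀ hr0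
    rcases lt_or_eq_of_le hs2le with h2 | h2
    · right
      refine ⟨2, by simpa using h2, ?_⟩
      intro j hj
      fin_cases j
      · exact absurd hj (by decide)
      · exact absurd hj (by decide)
      · exact absurd hj (by decide)
      · simpa using hs3
    · -- s 2 = 5, hence M₂ = H
      have hM2H : M₂ = H := (ub3 M₂ hr2).2 (by rw [← e2, h2])
      have hs1le : s 1 ≤ 2 := by
        rw [e1, hcnt]
        have hp0 : {i : Fin 3 | p i ≤ M₁} = ∅ := by
          ext i
          simp only [Set.mem_setOf_eq, Set.mem_empty_iff_false, iff_false]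
          intro hi
          exact hpH i (hi.trans (h12.trans hM2H.le))
        have := hQrank2 M₁ (le_of_eq hr1')
        rw [hp0]
        simpa using this
      rcases lt_or_eq_of_le hs1le with h1 | h1
      · right
        refine ⟨1, by simpa using h1, ?_⟩
        intro j hj
        fin_cases j
        · exact absurd hj (by decide)
        · exact absurd hj (by decide)
        · simpa using h2
        · simpa using hs3
      · rcases lt_or_eq_of_le hs0le with h0 | h0
        · right
          refine ⟨0, by simpa using h0, ?_⟩
          intro j hj
          fin_cases j
          · exact absurd hj (by decide)
          · simpa using h1
          · simpa using h2
          · simpa using hs3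
        · left
          funext j
          fin_cases j
          · simpa using h0
          · simpa using h1
          · simpa using h2
          · simpa using hs3
  · -- the two sequences differ
    intro h
    have := congrFun h 1
    simp at this

end
end

section
/- The ideal $I = (\prod_{i=1}^d (x_0 - i x_n), \ldots, \prod_{i=1}^d (x_{n-1} - i x_n))$ in $\mathbb{C}[x_0,\ldots,x_n]$ defines a zero-dimensional subscheme of $\mathbb{P}^n$ whose support is exactly the set of $d^n$ distinct points $\{(a_0 : \cdots : a_{n-1} : 1) : a_i \in \{1,\ldots,d\}\}$, and this subscheme is reduced. -/
/-!
Put `t = xₙ`. Then `ℂ[x₀,…,xₙ] ≅ ℂ[t][x₀,…,x_{n-1}]`, and the generators become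
`∏_{r ∈ S} (xᵢ - r)` for the set `S = {t, 2t, …, dt}` of `d` distinct elements of the domain
`ℂ[t]`. By the combinatorial Nullstellensatz, a polynomial lies in the ideal generated by such
products iff it vanishes on the grid `Sⁿ ⊆ ℂ[t]ⁿ`. If `fᵐ` vanishes there, so does `f` because
`ℂ[t]` is reduced, hence the ideal is radical.
The support is read off from the generators: `∏ⱼ (vᵢ - j vₙ) = 0` forces `vᵢ = aᵢ vₙ` with
`aᵢ ∈ {1,…,d}`, and then `vₙ ≠ 0` unless `v = 0`.
-/

open MvPolynomial

theorem Fin.ne_zero_and_forall_castSucc_eq_mul_last_iff {K : Type*} [CommSemiring K] {n : ℕ}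
    (A : Set K) (v : Fin (n + 1) → K) :
    (v ≠ 0 ∧ ∀ i : Fin n, ∃ a ∈ A, v i.castSucc = a * v (Fin.last n)) ↔
      ∃ (c : K) (a : Fin n → K), c ≠ 0 ∧ (∀ i, a i ∈ A) ∧
        v = c • (Fin.snoc a 1 : Fin (n + 1) → K) := by
  constructor
  · rintro ⟨hv0, hv⟩
    choose a haA hva using hv
    have hv : v = v (Fin.last n) • (Fin.snoc a 1 : Fin (n + 1) → K) := by
      ext k
      induction k using Fin.lastCases <;> simp [hva, mul_comm]
    refine ⟨v (Fin.last n), a, fun h0 => hv0 ?_, haA, hv⟩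
    rw [hv, h0, zero_smul]
  · rintro ⟨c, a, hc, haA, rfl⟩
    refine ⟨fun h0 => hc (by simpa using congrFun h0 (Fin.last n)), fun i => ⟨a i, haA i, ?_⟩⟩
    simp [mul_comm]

namespace MvPolynomial

section Grid

variable {σ R : Type*} [CommRing R] [IsDomain R] [Finite σ]

theorem mem_span_prod_X_sub_C_iff {S : σ → Finset R} (hS : ∀ i, (S i).Nonempty)
    {f : MvPolynomial σ R} :
    f ∈ Ideal.span (Set.range fun i => ∏ r ∈ S i, (X i - C r)) ↔
      ∀ x : σ → R, (∀ i, x i ∈ S i) → eval x f = 0 := by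
  constructor
  · intro hf x hx
    refine (Ideal.span_le (I := RingHom.ker (eval x))).2 ?_ hf
    rintro _ ⟨i, rfl⟩
    simpa [map_prod] using Finset.prod_eq_zero (hx i) (by simp)
  · intro hf
    obtain ⟨c, -, rfl⟩ := combinatorial_nullstellensatz_exists_linearCombination S hS f hf
    rw [Ideal.span, ← Finsupp.range_linearCombination]
    exact LinearMap.mem_range_self _ c

theorem isRadical_span_prod_X_sub_C (S : σ → Finset R) :
    (Ideal.span (Set.range fun i => ∏ r ∈ S i, (X i - C r))).IsRadical := by
  by_cases hS : ∀ i, (S i).Nonempty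
  · rintro f ⟨m, hm⟩
    rw [mem_span_prod_X_sub_C_iff hS] at hm ⊢
    exact fun x hx => eq_zero_of_pow_eq_zero (by rw [← map_pow]; exact hm x hx)
  · obtain ⟨i, hi⟩ := not_forall.1 hS
    rw [Ideal.eq_top_of_isUnit_mem _ (Ideal.subset_span (Set.mem_range_self i))
      (by simp [Finset.not_nonempty_iff_eq_empty.1 hi])]
    exact fun _ _ => Submodule.mem_top

end Grid

section Homogeneous

variable {K : Type*} [CommRing K] [IsDomain K] {n : ℕ}

theorem isRadical_span_prod_X_castSucc_sub_C_mul_X_last (A : Finset K) :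
    (Ideal.span (Set.range fun i : Fin n => ∏ a ∈ A,
      (X i.castSucc - C a * X (Fin.last n) : MvPolynomial (Fin (n + 1)) K))).IsRadical := by
  classical
  -- over `K[t]`, `t = X (Fin.last n)`, the `i`-th generator splits with the distinct roots `a t`
  let φ := ((renameEquiv K (finSuccEquivLast (n := n))).trans
    (optionEquivRight K (Fin n))).toRingEquiv
  let S : Fin n → Finset (Polynomial K) := fun _ => A.image fun a => Polynomial.C a * Polynomial.X
  have hφ (i : Fin n) : ∏ a ∈ A, (X i.castSucc - C a * X (Fin.last n)) =
      φ.symm (∏ r ∈ S i, (X i - C r)) := by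
    rw [RingEquiv.eq_symm_apply, map_prod, Finset.prod_image]
    · simp [φ]
    · intro a _ b _ hab
      simpa using congrArg (Polynomial.coeff · 1) hab
  have hspan : Ideal.span (Set.range fun i : Fin n =>
      ∏ a ∈ A, (X i.castSucc - C a * X (Fin.last n) : MvPolynomial (Fin (n + 1)) K)) =
      (Ideal.span (Set.range fun i => ∏ r ∈ S i, (X i - C r))).comap φ := by
    rw [← Ideal.map_symm, Ideal.map_span, ← Set.range_comp]
    exact congrArg _ (congrArg _ (_root_.funext hφ))
  rw [hspan]
  exact (isRadical_span_prod_X_sub_C S).comap _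

theorem forall_mem_span_prod_X_castSucc_sub_C_mul_X_last_eval_eq_zero_iff (A : Finset K)
    (v : Fin (n + 1) → K) :
    (∀ f ∈ Ideal.span (Set.range fun i : Fin n =>
      ∏ a ∈ A, (X i.castSucc - C a * X (Fin.last n) : MvPolynomial (Fin (n + 1)) K)),
        eval v f = 0) ↔
      ∀ i : Fin n, ∃ a ∈ A, v i.castSucc = a * v (Fin.last n) := by
  change Ideal.span _ ≤ RingHom.ker (eval v) ↔ _
  simp [Ideal.span_le, Set.range_subset_iff, map_prod, Finset.prod_eq_zero_iff, sub_eq_zero]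

end Homogeneous

end MvPolynomial

theorem stmt_18_general (n d : ℕ) :
    {v : Fin (n + 1) → ℂ | v ≠ 0 ∧ ∀ f ∈ Ideal.span (Set.range fun i : Fin n =>
        ∏ j ∈ Finset.range d,
          ((X i.castSucc : MvPolynomial (Fin (n + 1)) ℂ) -
            C ((j : ℂ) + 1) * X (Fin.last n))), eval v f = 0} =
      {v : Fin (n + 1) → ℂ | ∃ (c : ℂ) (a : Fin n → ℂ), c ≠ 0 ∧
        (∀ i, ∃ j : ℕ, 1 ≤ j ∧ j ≤ d ∧ a i = j) ∧ v = c • (Fin.snoc a 1 : Fin (n + 1) → ℂ)} ∧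
    (Ideal.span (Set.range fun i : Fin n =>
        ∏ j ∈ Finset.range d,
          ((X i.castSucc : MvPolynomial (Fin (n + 1)) ℂ) -
            C ((j : ℂ) + 1) * X (Fin.last n)))).IsRadical := by
  set A := (Finset.range d).image fun j : ℕ => (j : ℂ) + 1
  have hprod (i : Fin n) : ∏ j ∈ Finset.range d,
      ((X i.castSucc : MvPolynomial (Fin (n + 1)) ℂ) - C ((j : ℂ) + 1) * X (Fin.last n)) =
      ∏ a ∈ A, (X i.castSucc - C a * X (Fin.last n)) :=
    (Finset.prod_image (f := fun a => X i.castSucc - C a * X (Fin.last n))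
      fun j _ k _ h => by simpa using h).symm
  have hA (a : ℂ) : a ∈ (A : Set ℂ) ↔ ∃ j : ℕ, 1 ≤ j ∧ j ≤ d ∧ a = j := by
    simp only [A, Finset.coe_image, Finset.coe_range, Set.mem_image, Set.mem_Iio]
    constructor
    · rintro ⟨j, hj, rfl⟩
      exact ⟨j + 1, by omega, by omega, by push_cast; rfl⟩
    · rintro ⟨j, hj1, hjd, rfl⟩
      exact ⟨j - 1, by omega, by push_cast [Nat.cast_sub hj1]; ring⟩
  simp_rw [hprod]
  refine ⟨?_, isRadical_span_prod_X_castSucc_sub_C_mul_X_last A⟩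
  ext v
  simp only [Set.mem_ofPred_eq]
  rw [forall_mem_span_prod_X_castSucc_sub_C_mul_X_last_eval_eq_zero_iff]
  simp only [← hA]
  exact Fin.ne_zero_and_forall_castSucc_eq_mul_last_iff (A : Set ℂ) v

/-- **A reduced complete intersection of split hypersurfaces.** The ideal
`I = (∏_{i=1}^d (x₀ - i xₙ), …, ∏_{i=1}^d (x_{n-1} - i xₙ))` in `ℂ[x₀,…,xₙ]` defines a
zero-dimensional subscheme of `ℙⁿ` whose support (points of the affine cone minus the
origin, up to scaling) is exactly the set of `dⁿ` points `(a₀ : ⋯ : a_{n-1} : 1)` with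
each `aᵢ ∈ {1,…,d}`, and this subscheme is reduced (the ideal is radical). -/
theorem stmt_18 (n d : ℕ) (hn : 1 ≤ n) (hd : 1 ≤ d) :
    {v : Fin (n + 1) → ℂ | v ≠ 0 ∧ ∀ f ∈ Ideal.span (Set.range fun i : Fin n =>
        ∏ j ∈ Finset.range d,
          ((X i.castSucc : MvPolynomial (Fin (n + 1)) ℂ) -
            C ((j : ℂ) + 1) * X (Fin.last n))), eval v f = 0} =
      {v : Fin (n + 1) → ℂ | ∃ (c : ℂ) (a : Fin n → ℂ), c ≠ 0 ∧
        (∀ i, ∃ j : ℕ, 1 ≤ j ∧ j ≤ d ∧ a i = j) ∧ v = c • (Fin.snoc a 1 : Fin (n + 1) → ℂ)} ∧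
    (Ideal.span (Set.range fun i : Fin n =>
        ∏ j ∈ Finset.range d,
          ((X i.castSucc : MvPolynomial (Fin (n + 1)) ℂ) -
            C ((j : ℂ) + 1) * X (Fin.last n)))).IsRadical :=
  stmt_18_general n d
end

section
/- Assuming the Eisenbud-Green-Harris conjecture (every homogeneous ideal in $k[x_0,\ldots,x_{n-1}]$ containing a regular sequence of degrees $a_1 \le \cdots \le a_n$ has the same Hilbert function as an ideal containing $x_0^{a_1},\ldots,x_{n-1}^{a_n}$) and the Clements-Lindström consequence (any homogeneous ideal containing $(x_0^d,\ldots,x_{n-1}^d)$ has the same Hilbert series as $(x_0^d,\ldots,x_{n-1}^d) + L$ for some lex ideal $L$): if $F_1,\ldots,F_n$ is a regular sequence of degree-$d$ forms in $k[x_0,\ldots,x_n]$ and $F_{n+1},\ldots,F_{n+r}$ are degree-$d$ forms with $F_1,\ldots,F_{n+r}$ linearly independent, then $\dim_k k[x_0,\ldots,x_n]/(F_1,\ldots,F_{n+r})$ in each degree is at most the corresponding dimension for $(x_0^d,\ldots,x_{n-1}^d) + L_d$, where $L_d$ is generated by the first $r$ degree-$d$ monomials in lexicographic order excluding pure powers.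 -/
open MvPolynomial

attribute [local instance] MvPolynomial.gradedAlgebra

noncomputable section

/-- The Hilbert function of an ideal `I`: the `k`-dimension of the degree-`e` graded
piece of `R/I`, i.e. the quotient of the space of degree-`e` forms by those lying
in `I`. -/
def hilb (N : ℕ) (k : Type*) [Field k] (I : Ideal (MvPolynomial (Fin N) k)) (e : ℕ) :
    ℕ :=
  Module.finrank k
    ((homogeneousSubmodule (Fin N) k e) ⧸
      ((Submodule.restrictScalars k I ⊓ homogeneousSubmodule (Fin N) k e).comap
        (homogeneousSubmodule (Fin N) k e).subtype))

/-- `u` is lexicographically greater than `v` (with `x₀ > x₁ > ⋯`). -/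
def lexGt (N : ℕ) (u v : Fin N →₀ ℕ) : Prop :=
  ∃ i : Fin N, v i < u i ∧ ∀ j : Fin N, j < i → u j = v j

/-- A lex ideal: a monomial ideal whose monomials of each degree form an initial
segment of the lexicographic order. -/
def IsLexIdeal (N : ℕ) (k : Type*) [Field k] (L : Ideal (MvPolynomial (Fin N) k)) :
    Prop :=
  (∃ S : Set (Fin N →₀ ℕ), L = Ideal.span ((fun u => (monomial u (1 : k))) '' S)) ∧
  ∀ u v : Fin N →₀ ℕ, (u.sum fun _ x => x) = (v.sum fun _ x => x) →
    lexGt N u v → monomial v (1 : k) ∈ L → monomial u (1 : k) ∈ L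

/-! EGH replaces `(F₁,…,F_{n+r})` by an ideal `J ∋ x₀^d,…,x_{n-1}^d` with the same Hilbert
function, and Clements–Lindström replaces `J` by `P + L`, where `P = (x₀^d,…,x_{n-1}^d)` and `L`
is lex. The `F_i` are `n + r` independent forms of degree `d`, so `dim (P + L)_d ≥ n + r`.
If a monomial `u ∈ S` were missing from `P + L`, lexness of `L` would exclude from `L` every
degree-`d` monomial lex-below `u`: `x_n^d`, being lex-least, and every non-pure monomial
outside `S`, `S` being an initial lex segment of the non-pure ones. Then `(P + L)_d` would be
spanned by the `n` powers `x_i^d` (`i < n`) and the `r - 1` other monomials of `S`, too few.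
So `P + L ⊇ P + (S)`, and Hilbert functions are antitone. -/

lemma Finsupp.eq_of_le_of_degree_eq {σ : Type*} {g v : σ →₀ ℕ} (hle : g ≤ v)
    (h : g.degree = v.degree) : g = v := by
  obtain ⟨w, rfl⟩ := le_iff_exists_add.mp hle
  rw [map_add, left_eq_add, Finsupp.degree_eq_zero_iff] at h
  rw [h, add_zero]

namespace MvPolynomial

variable {σ k : Type*} [Field k]

instance [Finite σ] (e : ℕ) : Module.Finite k (homogeneousSubmodule σ k e) :=
  Module.Finite.iff_fg.mpr (homogeneousSubmodule_fg σ k e)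

lemma monomial_one_mem_span_monomial_image_iff {G : Set (σ →₀ ℕ)} {v : σ →₀ ℕ} :
    monomial v (1 : k) ∈ Ideal.span ((fun u => monomial u (1 : k)) '' G) ↔ ∃ g ∈ G, g ≤ v := by
  classical
  rw [mem_ideal_span_monomial_image, support_monomial, if_neg one_ne_zero]
  simp only [Finset.mem_singleton, forall_eq]

lemma span_X_pow_eq_span_monomial {ι : Type*} (x : ι → σ) (d : ℕ) :
    Ideal.span (Set.range fun i => (X (x i) : MvPolynomial σ k) ^ d) =
      Ideal.span ((fun u => monomial u (1 : k)) '' Set.range fun i => Finsupp.single (x i) d) := by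
  rw [← Set.range_comp]
  simp only [Function.comp_def, X_pow_eq_monomial]

end MvPolynomial

namespace Ideal

open Module

variable {σ k : Type*} [Field k]

def formsOfDegree (I : Ideal (MvPolynomial σ k)) (e : ℕ) : Submodule k (MvPolynomial σ k) :=
  I.restrictScalars k ⊓ homogeneousSubmodule σ k e

lemma formsOfDegree_mono {I J : Ideal (MvPolynomial σ k)} (h : I ≤ J) (e : ℕ) :
    I.formsOfDegree e ≤ J.formsOfDegree e :=
  inf_le_inf_right _ (Submodule.restrictScalars_mono k h)

instance [Finite σ] (I : Ideal (MvPolynomial σ k)) (e : ℕ) :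
    Module.Finite k (I.formsOfDegree e) :=
  Submodule.finiteDimensional_of_le inf_le_right

lemma le_finrank_formsOfDegree {I : Ideal (MvPolynomial σ k)} [Finite σ] {m e : ℕ}
    {F : Fin m → MvPolynomial σ k} (hFdeg : ∀ i, (F i).IsHomogeneous e)
    (hind : LinearIndependent k F) (hFI : ∀ i, F i ∈ I) :
    m ≤ finrank k (I.formsOfDegree e) := by
  have hspan : Submodule.span k (Set.range F) ≤ I.formsOfDegree e :=
    Submodule.span_le.mpr (Set.range_subset_iff.mpr fun i => ⟨hFI i, hFdeg i⟩)
  simpa [finrank_span_eq_card hind] using Submodule.finrank_mono hspan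

/-- The degree-`e` forms of a monomial ideal are spanned by its degree-`e` monomials. -/
lemma finrank_formsOfDegree_span_monomial_le {G : Set (σ →₀ ℕ)} {e : ℕ}
    (T : Finset (σ →₀ ℕ)) (hT : ∀ v : σ →₀ ℕ, v.degree = e → (∃ g ∈ G, g ≤ v) → v ∈ T) :
    finrank k ((Ideal.span ((fun u => monomial u (1 : k)) '' G)).formsOfDegree e) ≤ T.card := by
  have hle : (Ideal.span ((fun u => monomial u (1 : k)) '' G)).formsOfDegree e ≤
      Submodule.span k (Set.range fun v : T => monomial (v : σ →₀ ℕ) (1 : k)) := by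
    rintro f ⟨hfI, hfdeg⟩
    rw [f.as_sum]
    refine Submodule.sum_mem _ fun v hv => ?_
    have hvT : v ∈ T := hT v (hfdeg.degree_eq_sum_deg_support hv).symm
      (mem_ideal_span_monomial_image.mp hfI v hv)
    rw [← mul_one (coeff v f), ← smul_eq_mul, ← smul_monomial]
    exact Submodule.smul_mem _ _ (Submodule.subset_span ⟨⟨v, hvT⟩, rfl⟩)
  have : Module.Finite k (Submodule.span k
      (Set.range fun v : T => monomial (v : σ →₀ ℕ) (1 : k))) :=
    FiniteDimensional.span_of_finite k (Set.finite_range _)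
  calc finrank k _ ≤ finrank k (Submodule.span k
          (Set.range fun v : T => monomial (v : σ →₀ ℕ) (1 : k))) :=
        Submodule.finrank_mono hle
    _ ≤ Fintype.card T := finrank_range_le_card _
    _ = T.card := Fintype.card_coe T

end Ideal

section HilbertFunction

open Module

variable {k : Type*} [Field k]

lemma hilb_add_finrank_formsOfDegree {N : ℕ} (I : Ideal (MvPolynomial (Fin N) k)) (e : ℕ) :
    hilb N k I e + finrank k (I.formsOfDegree e) =
      finrank k (homogeneousSubmodule (Fin N) k e) := by
  rw [← (Submodule.comapSubtypeEquivOfLe (p := I.formsOfDegree e) inf_le_right).finrank_eq]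
  exact Submodule.finrank_quotient_add_finrank _

lemma finrank_formsOfDegree_eq_of_hilb_eq {N : ℕ} {I J : Ideal (MvPolynomial (Fin N) k)}
    {e : ℕ} (h : hilb N k I e = hilb N k J e) :
    finrank k (I.formsOfDegree e) = finrank k (J.formsOfDegree e) := by
  have hI := hilb_add_finrank_formsOfDegree I e
  have hJ := hilb_add_finrank_formsOfDegree J e
  omega

lemma hilb_antitone {N : ℕ} {I J : Ideal (MvPolynomial (Fin N) k)} (h : I ≤ J) (e : ℕ) :
    hilb N k J e ≤ hilb N k I e := by
  have hI := hilb_add_finrank_formsOfDegree I e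
  have hJ := hilb_add_finrank_formsOfDegree J e
  have hIJ := Submodule.finrank_mono (Ideal.formsOfDegree_mono h e)
  omega

end HilbertFunction

section LexSegment

open Module Finset

variable {k : Type*} [Field k]

lemma lexGt_iff_toLex_lt {N : ℕ} {u v : Fin N →₀ ℕ} : lexGt N u v ↔ toLex v < toLex u := by
  rw [Finsupp.Lex.lt_iff]
  simp only [lexGt, eq_comm (a := u _)]
  exact ⟨fun ⟨i, hi, hpre⟩ => ⟨i, hpre, hi⟩, fun ⟨i, hpre, hi⟩ => ⟨i, hi, hpre⟩⟩

lemma toLex_single_last_le {n d : ℕ} {u : Fin (n + 1) →₀ ℕ} (hu : u.degree = d) :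
    toLex (Finsupp.single (Fin.last n) d) ≤ toLex u := by
  refine not_lt.mp fun hlt => ?_
  obtain ⟨i, hpre, hi⟩ := Finsupp.Lex.lt_iff.mp hlt
  induction i using Fin.lastCases with
  | last =>
    have hzero (j : Fin n) : u j.castSucc = 0 := by
      simpa [Finsupp.single_apply, (Fin.castSucc_lt_last j).ne'] using
        hpre j.castSucc (Fin.castSucc_lt_last j)
    rw [Finsupp.degree_eq_sum, Fin.sum_univ_castSucc] at hu
    simp [hzero] at hu hi
    omega
  | cast j => simp at hi

/-- A degree-`d` monomial of a lex ideal `L` that misses some `u ∈ S` lies lex-above `u`;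
that leaves only the pure powers other than `x_n^d` and the members of `S` other than `u`. -/
lemma IsLexIdeal.eq_single_castSucc_or_mem_erase {n d : ℕ}
    {L : Ideal (MvPolynomial (Fin (n + 1)) k)} (hL : IsLexIdeal (n + 1) k L)
    {S : Finset (Fin (n + 1) →₀ ℕ)}
    (hSlex : ∀ u ∈ S, ∀ v : Fin (n + 1) →₀ ℕ, v.degree = d →
      ¬ (∃ i, v = Finsupp.single i d) → v ∉ S → lexGt (n + 1) u v)
    {u v : Fin (n + 1) →₀ ℕ} (hu : u ∈ S) (hud : u.degree = d)
    (hupure : ¬ ∃ i, u = Finsupp.single i d) (huL : monomial u (1 : k) ∉ L)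
    (hvd : v.degree = d) (hvL : monomial v (1 : k) ∈ L) :
    (∃ i : Fin n, v = Finsupp.single i.castSucc d) ∨ v ∈ S.erase u := by
  have not_lexGt : ¬ lexGt (n + 1) u v := fun h => huL (hL.2 u v (hud.trans hvd.symm) h hvL)
  by_cases hvpure : ∃ i, v = Finsupp.single i d
  · obtain ⟨i, rfl⟩ := hvpure
    induction i using Fin.lastCases with
    | last =>
      refine absurd (lexGt_iff_toLex_lt.mpr ((toLex_single_last_le hud).lt_of_ne ?_)) not_lexGt
      exact fun h => hupure ⟨Fin.last n, (toLex.injective h).symm⟩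
    | cast j => exact Or.inl ⟨j, rfl⟩
  · refine Or.inr (mem_erase.mpr ⟨fun h => huL (h ▸ hvL), ?_⟩)
    by_contra hvS
    exact not_lexGt (hSlex u hu v hvd hvpure hvS)

lemma monomial_mem_sup_of_le_finrank {n r d : ℕ} {L : Ideal (MvPolynomial (Fin (n + 1)) k)}
    (hL : IsLexIdeal (n + 1) k L) {S : Finset (Fin (n + 1) →₀ ℕ)} (hScard : S.card = r)
    (hSdeg : ∀ u ∈ S, u.degree = d ∧ ¬ ∃ i, u = Finsupp.single i d)
    (hSlex : ∀ u ∈ S, ∀ v : Fin (n + 1) →₀ ℕ, v.degree = d →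
      ¬ (∃ i, v = Finsupp.single i d) → v ∉ S → lexGt (n + 1) u v)
    (hrank : n + r ≤ finrank k ((Ideal.span (Set.range fun i : Fin n =>
      (X i.castSucc : MvPolynomial (Fin (n + 1)) k) ^ d) ⊔ L).formsOfDegree d))
    {u : Fin (n + 1) →₀ ℕ} (hu : u ∈ S) :
    monomial u (1 : k) ∈ Ideal.span (Set.range fun i : Fin n =>
      (X i.castSucc : MvPolynomial (Fin (n + 1)) k) ^ d) ⊔ L := by
  classical
  by_contra huPL
  have huL : monomial u (1 : k) ∉ L := fun h => huPL (Ideal.mem_sup_right h)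
  obtain ⟨SL, hSL⟩ := hL.1
  set pure := Set.range fun i : Fin n => Finsupp.single (i.castSucc : Fin (n + 1)) d
  have hPL : Ideal.span (Set.range fun i : Fin n =>
      (X i.castSucc : MvPolynomial (Fin (n + 1)) k) ^ d) ⊔ L =
      Ideal.span ((fun u => monomial u (1 : k)) '' (pure ∪ SL)) := by
    rw [Set.image_union, Ideal.span_union, span_X_pow_eq_span_monomial, hSL]
  set T := univ.image (fun i : Fin n => Finsupp.single (i.castSucc : Fin (n + 1)) d) ∪ S.erase u
  have hT : ∀ v : Fin (n + 1) →₀ ℕ, v.degree = d → (∃ g ∈ pure ∪ SL, g ≤ v) → v ∈ T := by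
    rintro v hvd ⟨g, ⟨i, rfl⟩ | hg, hgv⟩
    · rw [← Finsupp.eq_of_le_of_degree_eq hgv (by rw [hvd, Finsupp.degree_single])]
      exact mem_union_left _ (mem_image_of_mem _ (mem_univ i))
    · have hvL : monomial v (1 : k) ∈ L :=
        hSL ▸ monomial_one_mem_span_monomial_image_iff.mpr ⟨g, hg, hgv⟩
      rcases hL.eq_single_castSucc_or_mem_erase hSlex hu (hSdeg u hu).1 (hSdeg u hu).2 huL hvd
        hvL with ⟨i, rfl⟩ | hv
      · exact mem_union_left _ (mem_image_of_mem _ (mem_univ i))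
      · exact mem_union_right _ hv
  have hTcard : T.card ≤ n + (r - 1) :=
    (card_union_le _ _).trans (add_le_add (card_image_le.trans (by simp))
      (by rw [card_erase_of_mem hu, hScard]))
  have hr : 0 < r := hScard ▸ card_pos.mpr ⟨u, hu⟩
  have hle := Ideal.finrank_formsOfDegree_span_monomial_le (k := k) (e := d) T hT
  rw [← hPL] at hle
  omega

end LexSegment

theorem stmt_19_general {k : Type*} [Field k] (n r d : ℕ) (hd : 2 ≤ d)
    (hEGH : ∀ (s : ℕ) (hs : s ≤ n + 1) (a : Fin s → ℕ), Monotone a → (∀ i, 2 ≤ a i) →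
      ∀ I : Ideal (MvPolynomial (Fin (n + 1)) k),
        I.IsHomogeneous (homogeneousSubmodule (Fin (n + 1)) k) →
        (∃ f : Fin s → MvPolynomial (Fin (n + 1)) k,
          (∀ i, f i ∈ I) ∧ (∀ i, (f i).IsHomogeneous (a i)) ∧
          RingTheory.Sequence.IsRegular (MvPolynomial (Fin (n + 1)) k) (List.ofFn f)) →
        ∃ J : Ideal (MvPolynomial (Fin (n + 1)) k),
          J.IsHomogeneous (homogeneousSubmodule (Fin (n + 1)) k) ∧
          (∀ i : Fin s, (X (Fin.castLE hs i) : MvPolynomial (Fin (n + 1)) k) ^ a i ∈ J) ∧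
          ∀ e, hilb (n + 1) k J e = hilb (n + 1) k I e)
    (hCL : ∀ I : Ideal (MvPolynomial (Fin (n + 1)) k),
      I.IsHomogeneous (homogeneousSubmodule (Fin (n + 1)) k) →
      (∀ i : Fin n, (X i.castSucc : MvPolynomial (Fin (n + 1)) k) ^ d ∈ I) →
      ∃ L : Ideal (MvPolynomial (Fin (n + 1)) k), IsLexIdeal (n + 1) k L ∧
        ∀ e, hilb (n + 1) k
            (Ideal.span (Set.range fun i : Fin n =>
              (X i.castSucc : MvPolynomial (Fin (n + 1)) k) ^ d) ⊔ L) e =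
          hilb (n + 1) k I e)
    (F : Fin (n + r) → MvPolynomial (Fin (n + 1)) k)
    (hFdeg : ∀ i, (F i).IsHomogeneous d)
    (hreg : RingTheory.Sequence.IsRegular (MvPolynomial (Fin (n + 1)) k)
      (List.ofFn fun i : Fin n => F (Fin.castAdd r i)))
    (hind : LinearIndependent k F)
    (S : Finset (Fin (n + 1) →₀ ℕ)) (hScard : S.card = r)
    (hSdeg : ∀ u ∈ S, (u.sum fun _ x => x) = d ∧ ¬ ∃ i, u = Finsupp.single i d)
    (hSlex : ∀ u ∈ S, ∀ v : Fin (n + 1) →₀ ℕ, (v.sum fun _ x => x) = d →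
      ¬ (∃ i, v = Finsupp.single i d) → v ∉ S → lexGt (n + 1) u v) :
    ∀ e, hilb (n + 1) k (Ideal.span (Set.range F)) e ≤
      hilb (n + 1) k
        (Ideal.span ((Set.range fun i : Fin n =>
            (X i.castSucc : MvPolynomial (Fin (n + 1)) k) ^ d) ∪
          ((fun u => (monomial u (1 : k))) '' (S : Set (Fin (n + 1) →₀ ℕ))))) e := by
  set P := Ideal.span (Set.range fun i : Fin n =>
    (X i.castSucc : MvPolynomial (Fin (n + 1)) k) ^ d)
  obtain ⟨J, hJhom, hJpow, hJ⟩ := hEGH n n.le_succ (fun _ => d) monotone_const (fun _ => hd)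
    (Ideal.span (Set.range F))
    (Ideal.homogeneous_span _ _ (by rintro _ ⟨i, rfl⟩; exact ⟨d, hFdeg i⟩))
    ⟨_, fun i => Ideal.subset_span ⟨Fin.castAdd r i, rfl⟩, fun i => hFdeg _, hreg⟩
  obtain ⟨L, hL, hPL⟩ := hCL J hJhom hJpow
  have hilb_eq (e : ℕ) : hilb (n + 1) k (P ⊔ L) e = hilb (n + 1) k (Ideal.span (Set.range F)) e :=
    (hPL e).trans (hJ e)
  have hrank : n + r ≤ Module.finrank k ((P ⊔ L).formsOfDegree d) := by
    rw [finrank_formsOfDegree_eq_of_hilb_eq (hilb_eq d)]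
    exact Ideal.le_finrank_formsOfDegree hFdeg hind fun i => Ideal.subset_span ⟨i, rfl⟩
  intro e
  refine (hilb_eq e).symm.trans_le (hilb_antitone ?_ e)
  rw [Ideal.span_union]
  refine sup_le le_sup_left (Ideal.span_le.mpr ?_)
  rintro _ ⟨u, hu, rfl⟩
  exact monomial_mem_sup_of_le_finrank hL hScard hSdeg hSlex hrank hu

/-- **The EGH conjecture implies the lex bound for ideals containing a regular sequence
of `d`-forms.** Assuming the Eisenbud–Green–Harris conjecture (`hEGH`) and the
Clements–Lindström consequence (`hCL`): if `F₁,…,Fₙ` is a regular sequence of degree-`d`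
forms in `k[x₀,…,xₙ]` and `F_{n+1},…,F_{n+r}` are degree-`d` forms with `F₁,…,F_{n+r}`
linearly independent, then in every degree `e` the Hilbert function of
`k[x₀,…,xₙ]/(F₁,…,F_{n+r})` is at most that of `k[x₀,…,xₙ]/((x₀^d,…,x_{n-1}^d) + L_d)`,
where `L_d` is generated by the first `r` degree-`d` monomials in lexicographic order
excluding pure powers. -/
theorem stmt_19 {k : Type*} [Field k] (n r d : ℕ) (hn : 1 ≤ n) (hd : 2 ≤ d)
    (hEGH : ∀ (s : ℕ) (hs : s ≤ n + 1) (a : Fin s → ℕ), Monotone a → (∀ i, 2 ≤ a i) →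
      ∀ I : Ideal (MvPolynomial (Fin (n + 1)) k),
        I.IsHomogeneous (homogeneousSubmodule (Fin (n + 1)) k) →
        (∃ f : Fin s → MvPolynomial (Fin (n + 1)) k,
          (∀ i, f i ∈ I) ∧ (∀ i, (f i).IsHomogeneous (a i)) ∧
          RingTheory.Sequence.IsRegular (MvPolynomial (Fin (n + 1)) k) (List.ofFn f)) →
        ∃ J : Ideal (MvPolynomial (Fin (n + 1)) k),
          J.IsHomogeneous (homogeneousSubmodule (Fin (n + 1)) k) ∧
          (∀ i : Fin s, (X (Fin.castLE hs i) : MvPolynomial (Fin (n + 1)) k) ^ a i ∈ J) ∧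
          ∀ e, hilb (n + 1) k J e = hilb (n + 1) k I e)
    (hCL : ∀ I : Ideal (MvPolynomial (Fin (n + 1)) k),
      I.IsHomogeneous (homogeneousSubmodule (Fin (n + 1)) k) →
      (∀ i : Fin n, (X i.castSucc : MvPolynomial (Fin (n + 1)) k) ^ d ∈ I) →
      ∃ L : Ideal (MvPolynomial (Fin (n + 1)) k), IsLexIdeal (n + 1) k L ∧
        ∀ e, hilb (n + 1) k
            (Ideal.span (Set.range fun i : Fin n =>
              (X i.castSucc : MvPolynomial (Fin (n + 1)) k) ^ d) ⊔ L) e =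
          hilb (n + 1) k I e)
    (F : Fin (n + r) → MvPolynomial (Fin (n + 1)) k)
    (hFdeg : ∀ i, (F i).IsHomogeneous d)
    (hreg : RingTheory.Sequence.IsRegular (MvPolynomial (Fin (n + 1)) k)
      (List.ofFn fun i : Fin n => F (Fin.castAdd r i)))
    (hind : LinearIndependent k F)
    (S : Finset (Fin (n + 1) →₀ ℕ)) (hScard : S.card = r)
    (hSdeg : ∀ u ∈ S, (u.sum fun _ x => x) = d ∧ ¬ ∃ i, u = Finsupp.single i d)
    (hSlex : ∀ u ∈ S, ∀ v : Fin (n + 1) →₀ ℕ, (v.sum fun _ x => x) = d →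
      ¬ (∃ i, v = Finsupp.single i d) → v ∉ S → lexGt (n + 1) u v) :
    ∀ e, hilb (n + 1) k (Ideal.span (Set.range F)) e ≤
      hilb (n + 1) k
        (Ideal.span ((Set.range fun i : Fin n =>
            (X i.castSucc : MvPolynomial (Fin (n + 1)) k) ^ d) ∪
          ((fun u => (monomial u (1 : k))) '' (S : Set (Fin (n + 1) →₀ ℕ))))) e :=
  stmt_19_general n r d hd hEGH hCL F hFdeg hreg hind S hScard hSdeg hSlex

end
end
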